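/- arXiv:1401.3135 — 7 statements merged into one kernel-verified Lean document; each statement's English description precedes it below -/
import Mathlib

section
/- Let B be the open unit ball of ℝ^M with M ≥ 3, and let P_n, n ∈ ℕ, be a sequence of convex polytopes with P_1 ⊂ Int P_2 ⊂ P_2 ⊂ Int P_3 ⊂ ⋯ ⊂ B, with ∪_{j=1}^∞ P_j = B, and such that every sequence w_j ∈ skel(P_j), j ∈ ℕ, satisfies Σ_{j=1}^∞ |w_{j+1} − w_j| = ∞. Let θ_n be a decreasing sequence of positive numbers with Σ_{n=1}^∞ θ_n < ∞ and, for each n, let U_n = { w ∈ bP_n : dist(w, skel(P_n)) < θ_n }. If p : [0,1) → B is a path such that |p(t)| → 1 as t → 1 and such that for all sufficiently large n the set p([0,1)) meets bP_n only at U_n, then p has infinite length. -/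
/-!
Let `τₙ` be the first time the path leaves `Int Pₙ`. Once `p 0 ∈ Int Pₙ`, the point `p τₙ` lies
on `bPₙ`, hence in `Uₙ`, so it is `θₙ`-close to a point `wₙ` of `skel Pₙ`; for the remaining `n`
any point of the (nonempty) skeleton will do. The `τₙ` increase, so if `p` had finite length then
`∑ |p τₙ₊₁ - p τₙ|` would be finite, and since `∑ θₙ < ∞` so would be `∑ |wₙ₊₁ - wₙ|`,
contradicting the hypothesis on the skeleta.

That the skeleton is nonempty needs a facet. Among the faces exposed by nonzero functionals take
one of maximal dimension: if its codimension were at least two, rotating the supporting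
hyperplane about the face until it meets a further vertex would expose a strictly larger face.
-/

/-- A facet of a convex polytope `P` in `ℝ^M`: a convex face (extreme subset) of dimension
`M - 1`. -/
def IsFacetR (M : ℕ) (P F : Set (EuclideanSpace ℝ (Fin M))) : Prop :=
  IsExtreme ℝ P F ∧ Convex ℝ F ∧ Module.finrank ℝ (vectorSpan ℝ F) = M - 1

/-- The skeleton of a convex polytope `P` in `ℝ^M`: the union, over all facets `F` of `P`, of
`F` minus the relative interior of `F`. -/
def skelR (M : ℕ) (P : Set (EuclideanSpace ℝ (Fin M))) : Set (EuclideanSpace ℝ (Fin M)) :=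
  ⋃ F ∈ {F : Set (EuclideanSpace ℝ (Fin M)) | IsFacetR M P F}, F \ intrinsicInterior ℝ F

open Set Filter Topology Module Submodule RealInnerProductSpace

section Exposed

variable {E : Type*} [AddCommGroup E] [Module ℝ E] [TopologicalSpace E]

theorem ContinuousLinearMap.vectorSpan_toExposed_le_ker (l : StrongDual ℝ E) (A : Set E) :
    vectorSpan ℝ (l.toExposed A) ≤ LinearMap.ker l.toLinearMap := by
  rw [vectorSpan_def, Submodule.span_le]
  rintro _ ⟨x, hx, y, hy, rfl⟩
  simp [le_antisymm (hy.2 x hx.1) (hx.2 y hy.1)]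

theorem finrank_vectorSpan_toExposed_add_one_le [FiniteDimensional ℝ E] {l : StrongDual ℝ E}
    (hl : l ≠ 0) (A : Set E) :
    finrank ℝ (vectorSpan ℝ (l.toExposed A)) + 1 ≤ finrank ℝ E := by
  have hl' : l.toLinearMap ≠ 0 := fun h => hl (ContinuousLinearMap.coe_injective h)
  rw [← Module.Dual.finrank_ker_add_one_of_ne_zero hl']
  exact Nat.add_le_add_right (Submodule.finrank_mono (l.vectorSpan_toExposed_le_ker A)) 1

theorem exists_toExposed_add_smul_superset {V : Finset E} (l g : StrongDual ℝ E) {x₀ : E}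
    (hx₀ : x₀ ∈ l.toExposed (convexHull ℝ (V : Set E)))
    (hg : ∀ x ∈ l.toExposed (convexHull ℝ (V : Set E)), g x = g x₀)
    (hV : ∃ v ∈ V, g x₀ < g v) :
    ∃ ε : ℝ, l.toExposed (convexHull ℝ (V : Set E)) ⊆
        (l + ε • g).toExposed (convexHull ℝ (V : Set E)) ∧
      ∃ v ∈ V, v ∈ (l + ε • g).toExposed (convexHull ℝ (V : Set E)) ∧ g x₀ < g v := by
  classical
  set P := convexHull ℝ (V : Set E)
  set T := V.filter fun v => g x₀ < g v
  have hT : T.Nonempty := by simpa [T, Finset.filter_nonempty_iff] using hV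
  have hlT : ∀ v ∈ T, l v < l x₀ := by
    intro v hv
    obtain ⟨hvV, hgv⟩ := Finset.mem_filter.1 hv
    refine (hx₀.2 v (subset_convexHull ℝ _ hvV)).lt_of_ne fun h => hgv.ne' ?_
    exact hg v ⟨subset_convexHull ℝ _ hvV, fun y hy => h ▸ hx₀.2 y hy⟩
  -- the largest tilt that keeps every vertex below the level of the face
  set ε := T.inf' hT fun v => (l x₀ - l v) / (g v - g x₀)
  have hbound : ∀ y ∈ P, (l + ε • g) y ≤ (l + ε • g) x₀ := by
    refine fun y hy => convexHull_min (fun v hv => ?_)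
      (convex_halfSpace_le (l + ε • g).toLinearMap.isLinear _) hy
    show l v + ε * g v ≤ l x₀ + ε * g x₀
    by_cases hgv : g x₀ < g v
    · have := Finset.inf'_le (s := T) (fun v => (l x₀ - l v) / (g v - g x₀))
        (Finset.mem_filter.2 ⟨hv, hgv⟩)
      rw [le_div_iff₀ (by linarith)] at this
      linarith
    · have hε : 0 ≤ ε := (Finset.le_inf'_iff _ _).2 fun v hv =>
        div_nonneg (by linarith [hlT v hv]) (by linarith [(Finset.mem_filter.1 hv).2])
      nlinarith [hx₀.2 v (subset_convexHull ℝ _ hv)]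
  have hmem : ∀ z ∈ P, (l + ε • g) z = (l + ε • g) x₀ → z ∈ (l + ε • g).toExposed P :=
    fun z hz hzx₀ => ⟨hz, fun y hy => hzx₀ ▸ hbound y hy⟩
  obtain ⟨v, hvT, hvε⟩ := T.exists_mem_eq_inf' hT fun v => (l x₀ - l v) / (g v - g x₀)
  obtain ⟨hvV, hgv⟩ := Finset.mem_filter.1 hvT
  replace hvε : ε = (l x₀ - l v) / (g v - g x₀) := hvε
  refine ⟨ε, fun x hx => hmem x hx.1 ?_, v, hvV, hmem v (subset_convexHull ℝ _ hvV) ?_, hgv⟩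
  · simp [le_antisymm (hx₀.2 x hx.1) (hx.2 x₀ hx₀.1), hg x hx]
  · simp only [add_apply, smul_apply, smul_eq_mul, hvε]
    field_simp [(sub_pos.2 hgv).ne']
    ring

end Exposed

section Facet

variable {E : Type*} [NormedAddCommGroup E] [InnerProductSpace ℝ E]

theorem exists_inner_lt_of_vectorSpan_eq_top {s : Set E} (hs : vectorSpan ℝ s = ⊤)
    {K : Submodule ℝ E} (hK : K ≠ ⊥) (x : E) : ∃ u ∈ K, ∃ v ∈ s, ⟪u, x⟫ < ⟪u, v⟫ := by
  obtain ⟨u, hu, hu0⟩ := Submodule.exists_mem_ne_zero_of_ne_bot hK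
  obtain ⟨v, hv, hne⟩ : ∃ v ∈ s, ⟪u, v⟫ ≠ ⟪u, x⟫ := by
    by_contra! h
    have hle : vectorSpan ℝ s ≤ (ℝ ∙ u)ᗮ := by
      rw [vectorSpan_def, Submodule.span_le]
      rintro _ ⟨y, hy, z, hz, rfl⟩
      simp [mem_orthogonal_singleton_iff_inner_right, inner_sub_right, h y hy, h z hz]
    have : u ∈ (ℝ ∙ u)ᗮ := hle (hs ▸ Submodule.mem_top)
    exact hu0 (inner_self_eq_zero.1 (mem_orthogonal_singleton_iff_inner_right.1 this))
  rcases hne.lt_or_gt with h | h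
  · exact ⟨-u, neg_mem hu, v, hv, by simpa [inner_neg_left] using h⟩
  · exact ⟨u, hu, v, hv, h⟩

variable [FiniteDimensional ℝ E]

theorem Submodule.orthogonal_sup_span_singleton_ne_bot {W : Submodule ℝ E}
    (hW : finrank ℝ W + 2 ≤ finrank ℝ E) (a : E) : (W ⊔ ℝ ∙ a)ᗮ ≠ ⊥ := fun hbot => by
  have := Submodule.finrank_add_le_finrank_add_finrank W (ℝ ∙ a)
  have ha : finrank ℝ (ℝ ∙ a) ≤ 1 := by simpa using finrank_span_le_card ({a} : Set E)
  rw [Submodule.orthogonal_eq_bot_iff.1 hbot, finrank_top] at this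
  omega

theorem exists_finrank_vectorSpan_toExposed_innerSL_lt {V : Finset E}
    (hV : (interior (convexHull ℝ (V : Set E))).Nonempty) {a : E} (ha : a ≠ 0)
    (hdim : finrank ℝ (vectorSpan ℝ ((innerSL ℝ a).toExposed (convexHull ℝ (V : Set E)))) + 2 ≤
      finrank ℝ E) :
    ∃ b ≠ 0, finrank ℝ (vectorSpan ℝ ((innerSL ℝ a).toExposed (convexHull ℝ (V : Set E)))) <
      finrank ℝ (vectorSpan ℝ ((innerSL ℝ b).toExposed (convexHull ℝ (V : Set E)))) := by
  set P := convexHull ℝ (V : Set E)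
  set W := vectorSpan ℝ ((innerSL ℝ a).toExposed P)
  obtain ⟨x₀, hx₀⟩ : ((innerSL ℝ a).toExposed P).Nonempty := by
    obtain ⟨x, hx, hmax⟩ := (V.finite_toSet.isCompact_convexHull ℝ).exists_isMaxOn
      (hV.mono interior_subset) (innerSL ℝ a).continuous.continuousOn
    exact ⟨x, hx, hmax⟩
  have hVspan : vectorSpan ℝ (V : Set E) = ⊤ :=
    AffineSubspace.vectorSpan_eq_top_of_affineSpan_eq_top ℝ E E
      (affineSpan_eq_top_of_nonempty_interior hV)
  -- `u ⊥ W` makes `⟪u, ·⟫` constant on the face, and `u ⊥ a` keeps `a + ε • u` nonzero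
  obtain ⟨u, hu, v, hvV, hv⟩ := exists_inner_lt_of_vectorSpan_eq_top hVspan
    (Submodule.orthogonal_sup_span_singleton_ne_bot hdim a) x₀
  have huW : ∀ w ∈ W, ⟪u, w⟫ = 0 := fun w hw =>
    inner_left_of_mem_orthogonal (Submodule.mem_sup_left hw) hu
  have hau : ⟪a, u⟫ = 0 :=
    inner_right_of_mem_orthogonal (Submodule.mem_sup_right (Submodule.mem_span_singleton_self a)) hu
  have hface : ∀ x ∈ (innerSL ℝ a).toExposed P, innerSL ℝ u x = innerSL ℝ u x₀ := by
    intro x hx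
    have := huW _ (vsub_mem_vectorSpan ℝ hx hx₀)
    rw [vsub_eq_sub, inner_sub_right, sub_eq_zero] at this
    exact this
  obtain ⟨ε, hsub, v, -, hvF, hv⟩ :=
    exists_toExposed_add_smul_superset (innerSL ℝ a) (innerSL ℝ u) hx₀ hface ⟨v, hvV, hv⟩
  have hb : innerSL ℝ a + ε • innerSL ℝ u = innerSL ℝ (a + ε • u) := by
    ext x; simp
  rw [hb] at hsub hvF
  refine ⟨a + ε • u, fun h => ha ?_, Submodule.finrank_lt_finrank_of_lt
    ((vectorSpan_mono ℝ hsub).lt_of_ne fun h => ?_)⟩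
  · have : ⟪a, a + ε • u⟫ = ⟪a, a⟫ := by simp [inner_add_right, inner_smul_right, hau]
    rwa [h, inner_zero_right, eq_comm, inner_self_eq_zero] at this
  · have := huW _ (h ▸ vsub_mem_vectorSpan ℝ hvF (hsub hx₀))
    rw [vsub_eq_sub, inner_sub_right] at this
    simp only [innerSL_apply_apply] at hv
    linarith

theorem exists_finrank_vectorSpan_toExposed_innerSL_eq [Nontrivial E] {V : Finset E}
    (hV : (interior (convexHull ℝ (V : Set E))).Nonempty) :
    ∃ a : E, finrank ℝ (vectorSpan ℝ ((innerSL ℝ a).toExposed (convexHull ℝ (V : Set E)))) =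
      finrank ℝ E - 1 := by
  have hle : ∀ a : E, a ≠ 0 →
      finrank ℝ (vectorSpan ℝ ((innerSL ℝ a).toExposed (convexHull ℝ (V : Set E)))) + 1 ≤
        finrank ℝ E :=
    fun a ha => finrank_vectorSpan_toExposed_add_one_le
      (fun h => ha (by simpa using congrArg (fun l => l a) h)) _
  obtain ⟨a, ha⟩ := exists_ne (0 : E)
  induction hk : finrank ℝ E - 1 - finrank ℝ (vectorSpan ℝ ((innerSL ℝ a).toExposed
      (convexHull ℝ (V : Set E)))) using Nat.strong_induction_on generalizing a with
  | _ k ih =>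
    by_cases h : finrank ℝ (vectorSpan ℝ ((innerSL ℝ a).toExposed (convexHull ℝ (V : Set E)))) =
        finrank ℝ E - 1
    · exact ⟨a, h⟩
    obtain ⟨b, hb, hlt⟩ :=
      exists_finrank_vectorSpan_toExposed_innerSL_lt hV ha (by have := hle a ha; omega)
    exact ih _ (by have := hle b hb; omega) b hb rfl

end Facet

theorem IsCompact.nonempty_sdiff_intrinsicInterior {E : Type*} [NormedAddCommGroup E]
    [NormedSpace ℝ E] {F : Set E} (hF : IsCompact F) (hdim : vectorSpan ℝ F ≠ ⊥) :
    (F \ intrinsicInterior ℝ F).Nonempty := by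
  obtain ⟨x₀, hx₀⟩ : F.Nonempty := nonempty_iff_ne_empty.2 fun h => hdim (h ▸ vectorSpan_empty ℝ E)
  have hfrontier : intrinsicFrontier ℝ F ⊆ F \ intrinsicInterior ℝ F := fun x hx =>
    ⟨intrinsicFrontier_subset hF.isClosed hx, by
      rw [← intrinsicClosure_sdiff_intrinsicFrontier]; exact fun h => h.2 hx⟩
  refine Nonempty.mono hfrontier (Nonempty.image _ ?_)
  have : PreconnectedSpace (affineSpan ℝ F) :=
    Subtype.preconnectedSpace (affineSpan ℝ F).convex.isPreconnected
  refine nonempty_frontier_iff.2 ⟨⟨⟨x₀, subset_affineSpan ℝ F hx₀⟩, hx₀⟩, fun huniv => ?_⟩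
  -- a compact set cannot contain its affine span unless that span is a point
  have hdir : (vectorSpan ℝ F : Set E) ⊆ (· - x₀) '' F := fun v hv => by
    have : v +ᵥ x₀ ∈ affineSpan ℝ F :=
      AffineSubspace.vadd_mem_of_mem_direction (by rwa [direction_affineSpan])
        (subset_affineSpan ℝ F hx₀)
    have hmem : (⟨v +ᵥ x₀, this⟩ : affineSpan ℝ F) ∈ Subtype.val ⁻¹' F := huniv ▸ mem_univ _
    exact ⟨v + x₀, hmem, by simp⟩
  have := Submodule.nontrivial_iff_ne_bot.2 hdim
  refine NormedSpace.unbounded_univ ℝ (vectorSpan ℝ F) (Bornology.isBounded_image_subtype_val.1 ?_)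
  rw [image_univ, Subtype.range_coe]
  exact ((hF.image (continuous_sub_right x₀)).isBounded).subset hdir

theorem skelR_convexHull_nonempty {M : ℕ} (hM : 2 ≤ M) {V : Finset (EuclideanSpace ℝ (Fin M))}
    (hV : (interior (convexHull ℝ (V : Set (EuclideanSpace ℝ (Fin M))))).Nonempty) :
    (skelR M (convexHull ℝ (V : Set (EuclideanSpace ℝ (Fin M))))).Nonempty := by
  have : Nontrivial (EuclideanSpace ℝ (Fin M)) :=
    Module.nontrivial_of_finrank_pos (by rw [finrank_euclideanSpace_fin]; omega)
  obtain ⟨a, ha⟩ := exists_finrank_vectorSpan_toExposed_innerSL_eq hV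
  rw [finrank_euclideanSpace_fin] at ha
  have hexp := ContinuousLinearMap.toExposed.isExposed (l := innerSL ℝ a)
    (A := convexHull ℝ (V : Set (EuclideanSpace ℝ (Fin M))))
  obtain ⟨x, hx⟩ := IsCompact.nonempty_sdiff_intrinsicInterior
    (hexp.isCompact (V.finite_toSet.isCompact_convexHull ℝ))
    fun h => by rw [h, finrank_bot] at ha; omega
  exact ⟨x, mem_biUnion (x := (innerSL ℝ a).toExposed _)
    ⟨hexp.isExtreme, hexp.convex (convex_convexHull ℝ _), ha⟩ hx⟩

section ExitTime

variable {X : Type*} {p : ℝ → X} {s s' : Set X}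

-- junk value `0` when `p` never leaves `s` on `[0, 1)`
noncomputable def exitTime (p : ℝ → X) (s : Set X) : ℝ :=
  sInf {t ∈ Ico (0 : ℝ) 1 | p t ∉ s}

theorem exitTime_mem_Ico (h : ∃ t ∈ Ico (0 : ℝ) 1, p t ∉ s) : exitTime p s ∈ Ico (0 : ℝ) 1 := by
  obtain ⟨t, ht, hts⟩ := h
  exact ⟨le_csInf ⟨t, ht, hts⟩ fun _ hu => hu.1.1,
    (csInf_le (s := {t ∈ Ico (0 : ℝ) 1 | p t ∉ s}) ⟨0, fun _ hu => hu.1.1⟩ ⟨ht, hts⟩).trans_lt ht.2⟩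

theorem exitTime_mono (hss' : s ⊆ s') (h : ∃ t ∈ Ico (0 : ℝ) 1, p t ∉ s') :
    exitTime p s ≤ exitTime p s' :=
  csInf_le_csInf ⟨0, fun _ ht => ht.1.1⟩ h fun _ ht => ⟨ht.1, fun h' => ht.2 (hss' h')⟩

theorem apply_exitTime_mem_frontier [TopologicalSpace X] (hp : ContinuousOn p (Ico 0 1))
    (hs : IsOpen s) (h0 : p 0 ∈ s) (h : ∃ t ∈ Ico (0 : ℝ) 1, p t ∉ s) :
    p (exitTime p s) ∈ frontier s := by
  set S := {t ∈ Ico (0 : ℝ) 1 | p t ∉ s}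
  have hτ := exitTime_mem_Ico h
  have hbdd : BddBelow S := ⟨0, fun u hu => hu.1.1⟩
  have hout : p (exitTime p s) ∉ s := by
    have := ((hp _ hτ).mono (sep_subset _ _)).mem_closure_image
      (csInf_mem_closure (h.imp fun _ ht => ht) hbdd)
    exact closure_minimal (image_subset_iff.2 fun t ht => ht.2) hs.isClosed_compl this
  have hpos : 0 < exitTime p s := hτ.1.lt_of_ne fun h => hout (h ▸ h0)
  have hin : p (exitTime p s) ∈ closure s := by
    have := ((hp _ hτ).mono (Ico_subset_Ico_right hτ.2.le)).mem_closure_image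
      (by rw [closure_Ico hpos.ne]; exact right_mem_Icc.2 hpos.le)
    refine closure_mono (image_subset_iff.2 fun t ht => ?_) this
    by_contra hts
    exact (csInf_le hbdd ⟨⟨ht.1, ht.2.trans hτ.2⟩, hts⟩).not_gt ht.2
  rw [hs.frontier_eq]
  exact ⟨hin, hout⟩

end ExitTime

theorem exists_apply_notMem_of_tendsto_norm {E : Type*} [NormedAddCommGroup E] [ProperSpace E]
    {K : Set E} (hK : IsClosed K) (hKB : K ⊆ Metric.ball 0 1) {p : ℝ → E}
    (hp : Tendsto (fun t => ‖p t‖) (𝓝[<] 1) (𝓝 1)) : ∃ t ∈ Ico (0 : ℝ) 1, p t ∉ K := by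
  obtain ⟨r, hr, hKr⟩ := exists_lt_subset_ball hK hKB
  obtain ⟨t, hpt, ht⟩ :=
    ((hp.eventually (eventually_gt_nhds hr)).and (Ioo_mem_nhdsLT one_pos)).exists
  exact ⟨t, Ioo_subset_Ico_self ht, fun h => (mem_ball_zero_iff.1 (hKr h)).not_gt hpt⟩

theorem summable_dist_comp_of_eVariationOn_ne_top {α E : Type*} [LinearOrder α]
    [PseudoMetricSpace E] {f : α → E} {s : Set α} (hf : eVariationOn f s ≠ ⊤) {u : ℕ → α}
    (hu : Monotone u) (us : ∀ i, u i ∈ s) :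
    Summable fun i => dist (f (u (i + 1))) (f (u i)) := by
  refine summable_of_sum_range_le (c := (eVariationOn f s).toReal) (fun _ => dist_nonneg)
    fun n => ?_
  rw [← ENNReal.ofReal_le_iff_le_toReal hf, ENNReal.ofReal_sum_of_nonneg fun _ _ => dist_nonneg]
  simpa only [← edist_dist] using eVariationOn.sum_le (n := n) hu us

theorem exists_forall_mem_eventually_dist_lt {α : Type*} [PseudoMetricSpace α]
    {S : ℕ → Set α} (hS : ∀ n, (S n).Nonempty) {y : ℕ → α} {θ : ℕ → ℝ}
    (hy : ∀ᶠ n in atTop, Metric.infDist (y n) (S n) < θ n) :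
    ∃ x : ℕ → α, (∀ n, x n ∈ S n) ∧ ∀ᶠ n in atTop, dist (x n) (y n) < θ n := by
  have : ∀ n, ∃ x ∈ S n, Metric.infDist (y n) (S n) < θ n → dist x (y n) < θ n := by
    intro n
    by_cases hn : Metric.infDist (y n) (S n) < θ n
    · obtain ⟨x, hx, hdist⟩ := (Metric.infDist_lt_iff (hS n)).1 hn
      exact ⟨x, hx, fun _ => by rwa [dist_comm]⟩
    · obtain ⟨x, hx⟩ := hS n
      exact ⟨x, hx, fun h => absurd h hn⟩
  choose x hxS hx using this
  exact ⟨x, hxS, hy.mono hx⟩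

theorem summable_dist_succ_of_eventually_dist_lt {α : Type*} [PseudoMetricSpace α]
    {x y : ℕ → α} {θ : ℕ → ℝ} (hθ : Summable θ) (hy : Summable fun n => dist (y (n + 1)) (y n))
    (hxy : ∀ᶠ n in atTop, dist (x n) (y n) < θ n) :
    Summable fun n => dist (x (n + 1)) (x n) := by
  refine .of_norm_bounded_eventually_nat ((hy.add hθ).add ((summable_nat_add_iff 1).2 hθ)) ?_
  filter_upwards [hxy, (tendsto_add_atTop_nat 1).eventually hxy] with n hn hn1
  rw [Real.norm_of_nonneg dist_nonneg]
  calc dist (x (n + 1)) (x n)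
      ≤ dist (x (n + 1)) (y (n + 1)) + dist (y (n + 1)) (y n) + dist (y n) (x n) :=
        dist_triangle4 _ _ _ _
    _ ≤ dist (y (n + 1)) (y n) + θ n + θ (n + 1) := by rw [dist_comm (y n)]; linarith

theorem stmt3_general (M : ℕ) (hM : 3 ≤ M)
    (P : ℕ → Set (EuclideanSpace ℝ (Fin M)))
    (hpoly : ∀ n, ∃ V : Finset (EuclideanSpace ℝ (Fin M)), P n = convexHull ℝ ↑V)
    (hint : ∀ n, (interior (P n)).Nonempty)
    (hsub : ∀ n, P n ⊆ interior (P (n + 1)))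
    (hball : (⋃ n, P n) = Metric.ball 0 1)
    (hskel : ∀ w : ℕ → EuclideanSpace ℝ (Fin M),
      (∀ n, w n ∈ skelR M (P n)) →
      Filter.Tendsto (fun m => ∑ j ∈ Finset.range m, ‖w (j + 1) - w j‖)
        Filter.atTop Filter.atTop)
    (θ : ℕ → ℝ) (hθsum : Summable θ)
    (U : ℕ → Set (EuclideanSpace ℝ (Fin M)))
    (hU : ∀ n, U n = {w ∈ frontier (P n) | Metric.infDist w (skelR M (P n)) < θ n})
    (p : ℝ → EuclideanSpace ℝ (Fin M))
    (hp : ContinuousOn p (Set.Ico 0 1))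
    (hpin : ∀ t ∈ Set.Ico (0 : ℝ) 1, p t ∈ Metric.ball (0 : EuclideanSpace ℝ (Fin M)) 1)
    (hlim : Filter.Tendsto (fun t => ‖p t‖) (nhdsWithin 1 (Set.Iio 1)) (nhds 1))
    (hmeet : ∃ n₀ : ℕ, ∀ n ≥ n₀, ∀ t ∈ Set.Ico (0 : ℝ) 1,
      p t ∈ frontier (P n) → p t ∈ U n) :
    eVariationOn p (Set.Ico 0 1) = ⊤ := by
  obtain ⟨n₀, hn₀⟩ := hmeet
  have hcompact : ∀ n, IsCompact (P n) := fun n => by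
    obtain ⟨V, hV⟩ := hpoly n
    rw [hV]
    exact V.finite_toSet.isCompact_convexHull ℝ
  have hskel_ne : ∀ n, (skelR M (P n)).Nonempty := fun n => by
    obtain ⟨V, hV⟩ := hpoly n
    have hVint := hint n
    rw [hV] at hVint ⊢
    exact skelR_convexHull_nonempty (by omega) hVint
  have hmono : Monotone P := monotone_nat_of_le_succ fun n => (hsub n).trans interior_subset
  have hexit : ∀ n, ∃ t ∈ Ico (0 : ℝ) 1, p t ∉ interior (P n) := fun n =>
    (exists_apply_notMem_of_tendsto_norm (hcompact n).isClosed
      (hball ▸ subset_iUnion P n) hlim).imp fun _ ht => ⟨ht.1, mt (interior_subset ·) ht.2⟩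
  obtain ⟨m, hm⟩ := mem_iUnion.1 (hball ▸ hpin 0 ⟨le_rfl, one_pos⟩)
  set τ := fun n => exitTime p (interior (P n))
  have hτ_near : ∀ᶠ n in atTop, Metric.infDist (p (τ n)) (skelR M (P n)) < θ n := by
    refine eventually_atTop.2 ⟨max n₀ (m + 1), fun n hn => ?_⟩
    have hτU := hn₀ n (le_of_max_le_left hn) _ (exitTime_mem_Ico (hexit n)) <|
      frontier_interior_subset <| apply_exitTime_mem_frontier hp isOpen_interior
        (interior_mono (hmono (le_of_max_le_right hn)) (hsub m hm)) (hexit n)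
    rw [hU n] at hτU
    exact hτU.2
  obtain ⟨w, hw_skel, hw_near⟩ := exists_forall_mem_eventually_dist_lt hskel_ne hτ_near
  by_contra hfin
  have hτ_sum := summable_dist_comp_of_eVariationOn_ne_top hfin
    (fun i j hij => exitTime_mono (interior_mono (hmono hij)) (hexit j))
    (fun n => exitTime_mem_Ico (hexit n))
  have hw_sum := summable_dist_succ_of_eventually_dist_lt (y := fun n => p (τ n)) hθsum hτ_sum
    hw_near
  simp only [dist_eq_norm] at hw_sum
  exact not_tendsto_atTop_of_tendsto_nhds hw_sum.hasSum.tendsto_sum_nat (hskel w hw_skel)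

/-- Let `B` be the open unit ball of `ℝ^M`, `M ≥ 3`, and let `P n` be a sequence
of convex polytopes with `P n ⊆ Int (P (n+1)) ⊆ B`, `⋃ n, P n = B`, such that every sequence
`w n ∈ skel (P n)` satisfies `∑ ‖w (n+1) - w n‖ = ∞`. Let `θ n` be a decreasing sequence of
positive numbers with `∑ θ n < ∞` and let `U n` be the `θ n`-neighbourhood of `skel (P n)` in
`bP n`. If `p : [0,1) → B` is a path with `‖p t‖ → 1` as `t → 1` such that for all sufficiently
large `n` the image of `p` meets `bP n` only at `U n`, then `p` has infinite length. -/
theorem stmt3 (M : ℕ) (hM : 3 ≤ M)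
    (P : ℕ → Set (EuclideanSpace ℝ (Fin M)))
    (hpoly : ∀ n, ∃ V : Finset (EuclideanSpace ℝ (Fin M)), P n = convexHull ℝ ↑V)
    (hint : ∀ n, (interior (P n)).Nonempty)
    (hsub : ∀ n, P n ⊆ interior (P (n + 1)))
    (hball : (⋃ n, P n) = Metric.ball 0 1)
    (hskel : ∀ w : ℕ → EuclideanSpace ℝ (Fin M),
      (∀ n, w n ∈ skelR M (P n)) →
      Filter.Tendsto (fun m => ∑ j ∈ Finset.range m, ‖w (j + 1) - w j‖)
        Filter.atTop Filter.atTop)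
    (θ : ℕ → ℝ) (hθpos : ∀ n, 0 < θ n) (hθanti : Antitone θ) (hθsum : Summable θ)
    (U : ℕ → Set (EuclideanSpace ℝ (Fin M)))
    (hU : ∀ n, U n = {w ∈ frontier (P n) | Metric.infDist w (skelR M (P n)) < θ n})
    (p : ℝ → EuclideanSpace ℝ (Fin M))
    (hp : ContinuousOn p (Set.Ico 0 1))
    (hpin : ∀ t ∈ Set.Ico (0 : ℝ) 1, p t ∈ Metric.ball (0 : EuclideanSpace ℝ (Fin M)) 1)
    (hlim : Filter.Tendsto (fun t => ‖p t‖) (nhdsWithin 1 (Set.Iio 1)) (nhds 1))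
    (hmeet : ∃ n₀ : ℕ, ∀ n ≥ n₀, ∀ t ∈ Set.Ico (0 : ℝ) 1,
      p t ∈ frontier (P n) → p t ∈ U n) :
    eVariationOn p (Set.Ico 0 1) = ⊤ :=
  stmt3_general M hM P hpoly hint hsub hball hskel θ hθsum U hU p hp hpin hlim hmeet
end

section
/- Let M ≥ 2 and let π : ℝ^M → ℝ^{M−1} be the projection π(x_1, …, x_M) = (x_1, …, x_{M−1}). Let S ⊂ ℝ^{M−1} be a nondegenerate (M−1)-simplex with vertices v_1, …, v_M and let η > 0. There exists ω > 0 such that for every σ > 0 the following holds: if ψ is a Lipschitz function with Lipschitz constant ≤ ω defined on a neighbourhood of σS, if w_j = (σv_j, ψ(σv_j)) ∈ ℝ^M for 1 ≤ j ≤ M, if Π is the hyperplane in ℝ^M containing w_1, …, w_M, and if Γ ⊂ Π is the circumsphere in Π of the (M−1)-simplex with vertices w_1, …, w_M, then π(Γ) is contained in the (ση)-neighbourhood of the circumsphere of the simplex σS in ℝ^{M−1}. -/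
/-!
Put `P j = σ • v j`, `t j = ψ (P j)` and write `c' = (p, s)`. Affine independence gives a constant
`K`, scaling like `1 / σ`, with `|ε j| ≤ K ‖∑ ε j • P j‖` whenever `∑ ε j = 0`. Consequently the
hyperplane `Π`, which interpolates the `ω`-Lipschitz data `t` over the vertices, is the graph of an
affine function of slope at most `κ = O(ω)`, uniformly in `σ`.

A point `(y, z) ∈ Γ` satisfies `‖y - p‖² + (z - s)² = r'²` with `|z - s| ≤ κ ‖y - p‖`, so `‖y - p‖`
is `κ r'`-close to `r'`, and so is `‖P j - p‖` for every vertex. Subtracting these identities for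
two vertices, and the corresponding ones for the circumcentre `c`, gives
`2 ⟪P i - P k, c - p⟫ = (t k - s)² - (t i - s)² = O(ω κ σ (σ + ‖c - p‖))`, which forces
`‖c - p‖ = O(κ² σ)`. Altogether `|‖y - c‖ - r| = O(κ r)` with `r = σ · circumradius v`.
-/

open scoped RealInnerProductSpace

/-- The projection `π : ℝ^M → ℝ^(M-1)`, `π (x_1, …, x_M) = (x_1, …, x_{M-1})`. -/
def projR (M : ℕ) (x : EuclideanSpace ℝ (Fin M)) : EuclideanSpace ℝ (Fin (M - 1)) :=
  WithLp.toLp 2 (fun i => x (Fin.castLE (Nat.sub_le M 1) i))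

section AffineCoordBound

variable {ι E : Type*} [Fintype ι]

def AffineCoordBound [NormedAddCommGroup E] [NormedSpace ℝ E] (P : ι → E) (K : ℝ) : Prop :=
  ∀ ε : ι → ℝ, ∑ i, ε i = 0 → ∀ i, |ε i| ≤ K * ‖∑ i, ε i • P i‖

section Normed

variable [NormedAddCommGroup E] [NormedSpace ℝ E] {P : ι → E} {K : ℝ}

theorem AffineIndependent.exists_affineCoordBound (hP : AffineIndependent ℝ P) :
    ∃ K, 0 ≤ K ∧ AffineCoordBound P K := by
  let S := LinearMap.ker (Fintype.linearCombination ℝ fun _ : ι => (1 : ℝ))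
  have mem_S (ε : ι → ℝ) : ε ∈ S ↔ ∑ i, ε i = 0 := by
    simp [S, Fintype.linearCombination_apply]
  let A := (Fintype.linearCombination ℝ P).domRestrict S
  have hA : LinearMap.ker A = ⊥ := by
    rw [LinearMap.ker_eq_bot']
    rintro ⟨ε, hε⟩ hAε
    have hε0 := (mem_S ε).1 hε
    have hεP : ∑ i, ε i • P i = 0 := by simpa [A, Fintype.linearCombination_apply] using hAε
    ext i
    exact (affineIndependent_iff_of_fintype ℝ P).1 hP ε hε0
      (by rwa [Finset.weightedVSub_eq_linear_combination _ hε0]) i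
  obtain ⟨K, -, hK⟩ := A.exists_antilipschitzWith hA
  refine ⟨K, K.2, fun ε hε i => ?_⟩
  have hεS : ε ∈ S := (mem_S ε).2 hε
  calc |ε i| ≤ ‖ε‖ := norm_le_pi_norm ε i
    _ = ‖(⟨ε, hεS⟩ : S)‖ := rfl
    _ ≤ K * ‖A ⟨ε, hεS⟩‖ := hK.le_mul_norm (map_zero A) _
    _ = K * ‖∑ i, ε i • P i‖ := by simp [A, Fintype.linearCombination_apply]

theorem AffineCoordBound.affineIndependent (hK : AffineCoordBound P K) : AffineIndependent ℝ P := by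
  refine (affineIndependent_iff_of_fintype ℝ P).2 fun ε hε hεP i => ?_
  rw [Finset.weightedVSub_eq_linear_combination _ hε] at hεP
  simpa [hεP] using hK ε hε i

theorem AffineCoordBound.smul (hK : AffineCoordBound P K) {σ : ℝ} (hσ : 0 < σ) :
    AffineCoordBound (fun i => σ • P i) (K / σ) := by
  intro ε hε i
  have h : ‖∑ i, ε i • σ • P i‖ = σ * ‖∑ i, ε i • P i‖ := by
    simp_rw [smul_comm (ε _) σ, ← Finset.smul_sum, norm_smul, Real.norm_of_nonneg hσ.le]
  rw [h, ← mul_assoc, div_mul_cancel₀ _ hσ.ne']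
  exact hK ε hε i

theorem div_mul_sum_norm_smul_sub (P : ι → E) (k : ι) (K ω : ℝ) {σ : ℝ} (hσ : 0 < σ) :
    K / σ * ω * ∑ i, ‖σ • P i - σ • P k‖ = K * ω * ∑ i, ‖P i - P k‖ := by
  simp_rw [← smul_sub, norm_smul, Real.norm_of_nonneg hσ.le, ← Finset.mul_sum]
  field_simp

theorem exists_sum_eq_zero_of_mem_affineSpan {x y : E} (hx : x ∈ affineSpan ℝ (Set.range P))
    (hy : y ∈ affineSpan ℝ (Set.range P)) :
    ∃ ε : ι → ℝ, ∑ i, ε i = 0 ∧ x - y = ∑ i, ε i • P i := by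
  obtain ⟨δ, hδ, rfl⟩ := eq_affineCombination_of_mem_affineSpan_of_fintype hx
  obtain ⟨δ', hδ', rfl⟩ := eq_affineCombination_of_mem_affineSpan_of_fintype hy
  refine ⟨δ - δ', by simp [Finset.sum_sub_distrib, hδ, hδ'], ?_⟩
  simp [Finset.affineCombination_eq_linear_combination _ _ _ hδ,
    Finset.affineCombination_eq_linear_combination _ _ _ hδ', sub_smul, Finset.sum_sub_distrib]

theorem AffineCoordBound.abs_sum_mul_le (hK : AffineCoordBound P K) {t : ι → ℝ} {ω : ℝ} (k : ι)
    (ht : ∀ i, |t i - t k| ≤ ω * ‖P i - P k‖) {ε : ι → ℝ} (hε : ∑ i, ε i = 0) :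
    |∑ i, ε i * t i| ≤ K * ω * (∑ i, ‖P i - P k‖) * ‖∑ i, ε i • P i‖ := by
  have hshift : ∑ i, ε i * t i = ∑ i, ε i * (t i - t k) := by
    simp [mul_sub, Finset.sum_sub_distrib, ← Finset.sum_mul, hε]
  calc |∑ i, ε i * t i| ≤ ∑ i, |ε i| * |t i - t k| := by
        rw [hshift]; exact (Finset.abs_sum_le_sum_abs _ _).trans_eq (by simp [abs_mul])
    _ ≤ ∑ i, K * ‖∑ i, ε i • P i‖ * (ω * ‖P i - P k‖) :=
        Finset.sum_le_sum fun i _ => mul_le_mul (hK ε hε i) (ht i) (abs_nonneg _)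
          ((abs_nonneg _).trans (hK ε hε i))
    _ = K * ω * (∑ i, ‖P i - P k‖) * ‖∑ i, ε i • P i‖ := by
        simp only [Finset.mul_sum, Finset.sum_mul]; exact Finset.sum_congr rfl fun i _ => by ring

end Normed

section Inner

variable [NormedAddCommGroup E] [InnerProductSpace ℝ E] {P : ι → E} {K : ℝ}

theorem AffineCoordBound.norm_le_sum_abs_inner (hK : AffineCoordBound P K)
    (hspan : affineSpan ℝ (Set.range P) = ⊤) (k : ι) (x : E) :
    ‖x‖ ≤ K * ∑ i, |⟪P i - P k, x⟫| := by
  rcases eq_or_ne x 0 with rfl | hx0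
  · simp
  obtain ⟨ε, hε, hx⟩ := exists_sum_eq_zero_of_mem_affineSpan (P := P) (x := x) (y := 0)
    (hspan ▸ AffineSubspace.mem_top ℝ E x) (hspan ▸ AffineSubspace.mem_top ℝ E 0)
  rw [sub_zero] at hx
  have hx' : x = ∑ i, ε i • (P i - P k) := by
    simp [hx, smul_sub, Finset.sum_sub_distrib, ← Finset.sum_smul, hε]
  have hsq : ‖x‖ * ‖x‖ ≤ ‖x‖ * (K * ∑ i, |⟪P i - P k, x⟫|) :=
    calc ‖x‖ * ‖x‖ = ∑ i, ε i * ⟪P i - P k, x⟫ := by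
          rw [← real_inner_self_eq_norm_mul_norm]
          nth_rw 1 [hx']
          simp [sum_inner, real_inner_smul_left]
      _ ≤ ∑ i, |ε i| * |⟪P i - P k, x⟫| :=
          Finset.sum_le_sum fun i _ => (le_abs_self _).trans (abs_mul _ _).le
      _ ≤ ∑ i, K * ‖x‖ * |⟪P i - P k, x⟫| := by
          gcongr with i; rw [hx]; exact hK ε hε i
      _ = ‖x‖ * (K * ∑ i, |⟪P i - P k, x⟫|) := by
          rw [Finset.mul_sum, Finset.mul_sum]; exact Finset.sum_congr rfl fun i _ => by ring
  exact le_of_mul_le_mul_left hsq (norm_pos_iff.2 hx0)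

theorem two_inner_sub_eq_of_norm_sq_add_eq {A B c p : E} {α β : ℝ}
    (hp : ‖A - p‖ ^ 2 + α = ‖B - p‖ ^ 2 + β) (hc : ‖A - c‖ = ‖B - c‖) :
    2 * ⟪A - B, c - p⟫ = β - α := by
  have hc2 := congrArg (· ^ 2) hc
  simp only [norm_sub_sq_real, inner_sub_left, inner_sub_right] at hp hc2 ⊢
  linarith

theorem AffineCoordBound.norm_sub_le_of_norm_sq_add_sq_eq (hK : AffineCoordBound P K) (hK0 : 0 ≤ K)
    (hspan : affineSpan ℝ (Set.range P) = ⊤) (k : ι) {c p : E} {r R ω β : ℝ} {b : ι → ℝ}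
    (hc : ∀ i, ‖P i - c‖ = r) (hp : ∀ i, ‖P i - p‖ ^ 2 + b i ^ 2 = R)
    (hb : ∀ i, |b i| ≤ β) (hbk : ∀ i, |b i - b k| ≤ ω * ‖P i - P k‖) :
    ‖c - p‖ ≤ K * ω * (∑ i, ‖P i - P k‖) * β := by
  have hinner (i : ι) : 2 * ⟪P i - P k, c - p⟫ = b k ^ 2 - b i ^ 2 :=
    two_inner_sub_eq_of_norm_sq_add_eq (by rw [hp, hp]) (by rw [hc, hc])
  have hterm (i : ι) : |⟪P i - P k, c - p⟫| ≤ ω * ‖P i - P k‖ * β := by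
    have hfactor : ⟪P i - P k, c - p⟫ = -((b i - b k) * (b i + b k)) / 2 := by
      linear_combination hinner i / 2
    rw [hfactor, abs_div, abs_neg, abs_mul, abs_two]
    have hsum : |b i + b k| ≤ 2 * β := (abs_add_le _ _).trans (by linarith [hb i, hb k])
    have := mul_le_mul (hbk i) hsum (abs_nonneg _) ((abs_nonneg _).trans (hbk i))
    linarith
  calc ‖c - p‖ ≤ K * ∑ i, |⟪P i - P k, c - p⟫| := hK.norm_le_sum_abs_inner hspan k _
    _ ≤ K * ∑ i, ω * ‖P i - P k‖ * β := by gcongr with i; exact hterm i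
    _ = K * ω * (∑ i, ‖P i - P k‖) * β := by
        rw [Finset.mul_sum, Finset.mul_sum, Finset.sum_mul]
        exact Finset.sum_congr rfl fun i _ => by ring

end Inner

end AffineCoordBound

section Spheres

theorem abs_sub_le_abs_of_sq_add_sq_eq {u a R : ℝ} (hu : 0 ≤ u) (hR : 0 ≤ R)
    (h : u ^ 2 + a ^ 2 = R ^ 2) : |u - R| ≤ |a| := by
  have huR : u ≤ R := by nlinarith
  rw [abs_of_nonpos (by linarith)]
  nlinarith [sq_abs a, abs_nonneg a]

variable {E : Type*} [NormedAddCommGroup E]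

theorem abs_norm_sub_le_of_norm_sq_add_sq_eq {y Q p c : E} {a b r R κ : ℝ} (hκ : 0 ≤ κ)
    (hR : 0 ≤ R) (hy : ‖y - p‖ ^ 2 + a ^ 2 = R ^ 2) (ha : |a| ≤ κ * ‖y - p‖)
    (hQ : ‖Q - p‖ ^ 2 + b ^ 2 = R ^ 2) (hb : |b| ≤ κ * ‖Q - p‖) (hQc : ‖Q - c‖ = r) :
    |‖y - c‖ - r| ≤ 2 * ‖c - p‖ + κ * (2 + κ) * (r + ‖c - p‖) := by
  have hyR := abs_sub_le_abs_of_sq_add_sq_eq (norm_nonneg _) hR hy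
  have hQR := abs_sub_le_abs_of_sq_add_sq_eq (norm_nonneg _) hR hQ
  have hyp : ‖y - p‖ ≤ R := by nlinarith [sq_nonneg a, norm_nonneg (y - p)]
  have hyc : |‖y - c‖ - ‖y - p‖| ≤ ‖c - p‖ := by
    simpa [sub_sub_sub_cancel_left, norm_sub_rev] using abs_norm_sub_norm_le (y - c) (y - p)
  have hQp : |‖Q - p‖ - ‖Q - c‖| ≤ ‖c - p‖ := by
    simpa [sub_sub_sub_cancel_left, norm_sub_rev] using abs_norm_sub_norm_le (Q - p) (Q - c)
  have hQp' : ‖Q - p‖ ≤ r + ‖c - p‖ := by rw [← hQc]; linarith [abs_le.1 hQp]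
  have haR : |a| ≤ κ * R := ha.trans (mul_le_mul_of_nonneg_left hyp hκ)
  have hRQ : R ≤ (1 + κ) * (r + ‖c - p‖) :=
    calc R ≤ ‖Q - p‖ + |b| := by linarith [(abs_le.1 hQR).1]
      _ ≤ (1 + κ) * ‖Q - p‖ := by linarith
      _ ≤ (1 + κ) * (r + ‖c - p‖) := mul_le_mul_of_nonneg_left hQp' (by linarith)
  have hκR : κ * R ≤ κ * ((1 + κ) * (r + ‖c - p‖)) := mul_le_mul_of_nonneg_left hRQ hκ
  have hbQ : |b| ≤ κ * (r + ‖c - p‖) := hb.trans (mul_le_mul_of_nonneg_left hQp' hκ)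
  rw [abs_le] at hyR hQR hyc hQp ⊢
  constructor <;> linarith

theorem mem_thickening_sphere_of_abs_norm_sub_lt [NormedSpace ℝ E] {y c : E} {r δ : ℝ}
    (hne : (Metric.sphere c r).Nonempty) (h : |‖y - c‖ - r| < δ) :
    y ∈ Metric.thickening δ (Metric.sphere c r) := by
  rw [Metric.mem_thickening_iff]
  obtain ⟨z, hz⟩ := hne
  have hr : 0 ≤ r := dist_nonneg.trans_eq (Metric.mem_sphere.1 hz)
  rcases eq_or_ne y c with rfl | hyc
  · refine ⟨z, hz, ?_⟩
    rw [dist_comm, Metric.mem_sphere.1 hz]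
    simpa [abs_of_nonneg hr] using h
  · have hyc' : 0 < ‖y - c‖ := norm_pos_iff.2 (sub_ne_zero.2 hyc)
    refine ⟨c + (r / ‖y - c‖) • (y - c), ?_, ?_⟩
    · rw [mem_sphere_iff_norm, add_sub_cancel_left, norm_smul, Real.norm_of_nonneg (by positivity),
        div_mul_cancel₀ _ hyc'.ne']
    · rw [dist_eq_norm]
      convert h using 1
      rw [show y - (c + (r / ‖y - c‖) • (y - c)) = (1 - r / ‖y - c‖) • (y - c) by
        rw [sub_smul, one_smul]; abel, norm_smul, Real.norm_eq_abs, ← abs_of_pos hyc',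
        ← abs_mul, abs_of_pos hyc', sub_mul, one_mul, div_mul_cancel₀ _ hyc'.ne']

theorem Affine.Simplex.eq_smul_circumradius [InnerProductSpace ℝ E] {n : ℕ}
    (s : Affine.Simplex ℝ E n)
    (hs : affineSpan ℝ (Set.range s.points) = ⊤) {σ : ℝ} (hσ : 0 < σ) {c : E} {r : ℝ}
    (h : ∀ i, dist (σ • s.points i) c = r) : r = σ * s.circumradius := by
  have := s.eq_circumradius_of_dist_eq (p := σ⁻¹ • c) (hs ▸ AffineSubspace.mem_top ℝ E _)
    (r := σ⁻¹ * r) fun i => by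
      conv_lhs => rw [← inv_smul_smul₀ hσ.ne' (s.points i)]
      rw [dist_smul₀, Real.norm_of_nonneg (inv_nonneg.2 hσ.le), h i]
  rw [← this, mul_inv_cancel_left₀ hσ.ne']

end Spheres

def projRₗ (m : ℕ) : EuclideanSpace ℝ (Fin (m + 1)) →ₗ[ℝ] EuclideanSpace ℝ (Fin m) where
  toFun := projR (m + 1)
  map_add' _ _ := rfl
  map_smul' _ _ := rfl

theorem norm_sq_eq_norm_projRₗ_sq_add_sq {m : ℕ} (x : EuclideanSpace ℝ (Fin (m + 1))) :
    ‖x‖ ^ 2 = ‖projRₗ m x‖ ^ 2 + x (Fin.last m) ^ 2 := by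
  rw [EuclideanSpace.norm_sq_eq, EuclideanSpace.norm_sq_eq, Fin.sum_univ_castSucc]
  simp [projRₗ, Real.norm_eq_abs, sq_abs]
  rfl

section Lift

variable {m : ℕ} {P : Fin (m + 1) → EuclideanSpace ℝ (Fin m)} {K ω : ℝ}
  {w : Fin (m + 1) → EuclideanSpace ℝ (Fin (m + 1))}

theorem AffineCoordBound.abs_last_sub_le (hK : AffineCoordBound P K) (k : Fin (m + 1))
    (hw : ∀ j, projRₗ m (w j) = P j)
    (ht : ∀ i, |w i (Fin.last m) - w k (Fin.last m)| ≤ ω * ‖P i - P k‖)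
    {x y : EuclideanSpace ℝ (Fin (m + 1))} (hx : x ∈ affineSpan ℝ (Set.range w))
    (hy : y ∈ affineSpan ℝ (Set.range w)) :
    |x (Fin.last m) - y (Fin.last m)| ≤
      K * ω * (∑ i, ‖P i - P k‖) * ‖projRₗ m x - projRₗ m y‖ := by
  obtain ⟨ε, hε, hxy⟩ := exists_sum_eq_zero_of_mem_affineSpan hx hy
  have hlast : x (Fin.last m) - y (Fin.last m) = ∑ i, ε i * w i (Fin.last m) := by
    simpa using congrArg (· (Fin.last m)) hxy
  have hproj : projRₗ m x - projRₗ m y = ∑ i, ε i • P i := by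
    simp [← map_sub, hxy, hw]
  rw [hlast, hproj]
  exact hK.abs_sum_mul_le k ht hε

theorem AffineCoordBound.abs_norm_projRₗ_sub_le (hK : AffineCoordBound P K) (hK0 : 0 ≤ K)
    (k : Fin (m + 1)) {κ : ℝ}
    (hκ : K * ω * ∑ i, ‖P i - P k‖ ≤ κ) (hκ0 : 0 ≤ κ) (hκ1 : κ ≤ 1 / 2)
    (hw : ∀ j, projRₗ m (w j) = P j)
    (ht : ∀ i, |w i (Fin.last m) - w k (Fin.last m)| ≤ ω * ‖P i - P k‖)
    {c' : EuclideanSpace ℝ (Fin (m + 1))} {r' : ℝ} (hc' : c' ∈ affineSpan ℝ (Set.range w))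
    (hwc' : ∀ j, dist (w j) c' = r') {c : EuclideanSpace ℝ (Fin m)} {r : ℝ}
    (hc : ∀ j, dist (P j) c = r) {x : EuclideanSpace ℝ (Fin (m + 1))}
    (hx : x ∈ affineSpan ℝ (Set.range w)) (hxc' : dist x c' = r') :
    |‖projRₗ m x - c‖ - r| ≤ 5 * κ * r := by
  set p := projRₗ m c'
  have hspan : affineSpan ℝ (Set.range P) = ⊤ :=
    hK.affineIndependent.affineSpan_eq_top_iff_card_eq_finrank_add_one.2 (by simp)
  have hr : 0 ≤ r := (hc k).symm ▸ dist_nonneg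
  have hr' : 0 ≤ r' := hwc' k ▸ dist_nonneg
  have hslope {q} (hq : q ∈ affineSpan ℝ (Set.range w)) :
      |q (Fin.last m) - c' (Fin.last m)| ≤ κ * ‖projRₗ m q - p‖ :=
    (hK.abs_last_sub_le k hw ht hq hc').trans (mul_le_mul_of_nonneg_right hκ (norm_nonneg _))
  have hsq (q) (hq : dist q c' = r') :
      ‖projRₗ m q - p‖ ^ 2 + (q (Fin.last m) - c' (Fin.last m)) ^ 2 = r' ^ 2 := by
    rw [← hq, dist_eq_norm, norm_sq_eq_norm_projRₗ_sq_add_sq, map_sub]; rfl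
  have hPc (j) : ‖P j - c‖ = r := by rw [← dist_eq_norm, hc]
  have hPp (j) : ‖P j - p‖ ≤ r + ‖c - p‖ := by
    simpa [hPc j] using norm_sub_le_norm_sub_add_norm_sub (P j) c p
  have hd : ‖c - p‖ ≤ κ * (κ * (r + ‖c - p‖)) := by
    refine (hK.norm_sub_le_of_norm_sq_add_sq_eq hK0 hspan k hPc
      (b := fun j => w j (Fin.last m) - c' (Fin.last m)) (R := r' ^ 2) (fun j => ?_) (fun j => ?_)
      (fun j => ?_)).trans (mul_le_mul_of_nonneg_right hκ (by positivity))
    · rw [← hw j]; exact hsq _ (hwc' j)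
    · exact (hslope (subset_affineSpan ℝ _ ⟨j, rfl⟩)).trans
        (mul_le_mul_of_nonneg_left (by rw [hw j]; exact hPp j) hκ0)
    · simpa using ht j
  have hsphere := abs_norm_sub_le_of_norm_sq_add_sq_eq hκ0 hr' (hsq x hxc') (hslope hx)
    (hsq (w k) (hwc' k)) (hslope (subset_affineSpan ℝ _ ⟨k, rfl⟩)) (hw k ▸ hPc k)
  have hd' : 3 * ‖c - p‖ ≤ 2 * κ * r := by
    nlinarith [mul_nonneg (by nlinarith : 0 ≤ 1 / 4 - κ * κ) (norm_nonneg (c - p)),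
      mul_nonneg (mul_nonneg (by linarith : 0 ≤ 1 / 2 - κ) hκ0) hr]
  have hrd : κ * (2 + κ) * (r + ‖c - p‖) ≤ κ * (5 / 2) * (4 / 3 * r) := by
    gcongr
    · linarith
    · nlinarith [mul_nonneg (by linarith : 0 ≤ 1 / 2 - κ) hr]
  linarith [mul_nonneg hκ0 hr]

end Lift

/-- **Lemma 5.1.** Let `M ≥ 2`, let `π : ℝ^M → ℝ^(M-1)` be the standard projection
and let `S ⊆ ℝ^(M-1)` be a nondegenerate `(M-1)`-simplex with vertices `v 1, …, v M` and `η > 0`.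
There is `ω > 0` such that for every `σ > 0` the following holds: if `ψ` is Lipschitz with
constant `≤ ω` on a neighbourhood of `σ • S`, if `w j = (σ • v j, ψ (σ • v j)) ∈ ℝ^M`, if `Π` is
the hyperplane in `ℝ^M` containing the `w j` (their affine span) and `Γ ⊆ Π` the circumsphere in
`Π` of the simplex with vertices `w 1, …, w M` (the set of points of `Π` at the common distance
`r'` from a point `c' ∈ Π` equidistant from all `w j`), then `π '' Γ` is contained in the
`σ*η`-neighbourhood of the circumsphere of `σ • S` (the sphere centered at the point `c`
equidistant, with common distance `r`, from all vertices `σ • v j`). -/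
theorem stmt4 (M : ℕ) (hM : 2 ≤ M)
    (v : Fin M → EuclideanSpace ℝ (Fin (M - 1))) (hv : AffineIndependent ℝ v)
    (η : ℝ) (hη : 0 < η) :
    ∃ ω : NNReal, 0 < ω ∧
      ∀ σ : ℝ, 0 < σ →
        ∀ (ψ : EuclideanSpace ℝ (Fin (M - 1)) → ℝ) (V : Set (EuclideanSpace ℝ (Fin (M - 1)))),
          IsOpen V →
          convexHull ℝ (Set.range fun j => σ • v j) ⊆ V →
          LipschitzOnWith ω ψ V →
          ∀ w : Fin M → EuclideanSpace ℝ (Fin M),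
            (∀ j, projR M (w j) = σ • v j) →
            (∀ j, w j ⟨M - 1, by omega⟩ = ψ (σ • v j)) →
            ∀ (c' : EuclideanSpace ℝ (Fin M)) (r' : ℝ),
              c' ∈ affineSpan ℝ (Set.range w) →
              (∀ j, dist (w j) c' = r') →
              ∀ (c : EuclideanSpace ℝ (Fin (M - 1))) (r : ℝ),
                (∀ j, dist (σ • v j) c = r) →
                projR M '' ((affineSpan ℝ (Set.range w) : Set (EuclideanSpace ℝ (Fin M))) ∩
                    Metric.sphere c' r') ⊆
                  Metric.thickening (σ * η) (Metric.sphere c r) := by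
  obtain ⟨m, rfl⟩ : ∃ m, M = m + 1 := ⟨M - 1, by omega⟩
  obtain ⟨K, hK0, hK⟩ := hv.exists_affineCoordBound
  let s : Affine.Simplex ℝ (EuclideanSpace ℝ (Fin m)) m := ⟨v, hv⟩
  have hr₀ := s.circumradius_nonneg
  set D := ∑ i, ‖v i - v 0‖
  set κ := min (1 / 2) (η / (5 * (s.circumradius + 1)))
  have hκ0 : 0 < κ := lt_min (by norm_num) (div_pos hη (by positivity))
  set ω := κ / (K * D + 1)
  have hω : 0 < ω := div_pos hκ0 (by positivity)
  have hKωD : K * ω * D ≤ κ := by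
    rw [mul_right_comm, mul_div_assoc', div_le_iff₀ (by positivity)]
    nlinarith
  refine ⟨ω.toNNReal, Real.toNNReal_pos.2 hω, ?_⟩
  intro σ hσ ψ V _ hVS hψ w hwP hwψ c' r' hc' hwc' c r hc
  rintro _ ⟨x, ⟨hx, hxc'⟩, rfl⟩
  have hlip (i) : |w i (Fin.last m) - w 0 (Fin.last m)| ≤ ω * ‖σ • v i - σ • v 0‖ := by
    have hV (j) : σ • v j ∈ V := hVS (subset_convexHull ℝ _ ⟨j, rfl⟩)
    have hwψ' (j) : w j (Fin.last m) = ψ (σ • v j) := hwψ j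
    rw [hwψ' i, hwψ' 0, ← Real.dist_eq, ← dist_eq_norm, ← Real.coe_toNNReal ω hω.le]
    exact hψ.dist_le_mul _ (hV i) _ (hV 0)
  have hest := (hK.smul hσ).abs_norm_projRₗ_sub_le (div_nonneg hK0 hσ.le) 0
    ((div_mul_sum_norm_smul_sub v 0 K ω hσ).trans_le hKωD) hκ0.le (min_le_left _ _) hwP hlip
    hc' hwc' hc hx (Metric.mem_sphere.1 hxc')
  have hr : r = σ * s.circumradius :=
    s.eq_smul_circumradius (hv.affineSpan_eq_top_iff_card_eq_finrank_add_one.2 (by simp)) hσ hc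
  refine mem_thickening_sphere_of_abs_norm_sub_lt ⟨_, hc 0⟩ (hest.trans_lt ?_)
  have hκη : κ * (5 * (s.circumradius + 1)) ≤ η :=
    (le_div_iff₀ (by positivity)).1 (min_le_right _ _)
  rw [hr]
  nlinarith
end

section
/- Let 0 < r < 1, let a be a point of the sphere of radius r centered at the origin in ℝ^M, and let A be a subset of that sphere such that |x − a| ≤ γ for all x ∈ A, where 0 < γ < r. Then the convex hull of A does not meet the closed ball of radius ρ = r − γ²/r centered at the origin. -/
/-! The whole cap `A` lies in the half-space `{y | r² - γ²/2 ≤ ⟪a, y⟫}`, since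
`2⟪a, x⟫ = ‖a‖² + ‖x‖² - ‖x - a‖²`; this half-space is convex, so it contains the convex hull of
`A`. On the other hand, by Cauchy–Schwarz `⟪a, y⟫ ≤ r ρ = r² - γ²` on the closed ball of
radius `ρ`, which is strictly less than `r² - γ²/2`. -/

open Metric

variable {E : Type*} [NormedAddCommGroup E] [InnerProductSpace ℝ E]

lemma sq_norm_sub_sq_div_two_le_real_inner_of_dist_le {a x : E} {γ : ℝ} (hx : ‖x‖ = ‖a‖)
    (hxa : dist x a ≤ γ) : ‖a‖ ^ 2 - γ ^ 2 / 2 ≤ inner ℝ a x := by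
  have hsq : ‖x - a‖ ^ 2 ≤ γ ^ 2 := by
    rw [← dist_eq_norm]
    exact pow_le_pow_left₀ dist_nonneg hxa 2
  have hexp : ‖x - a‖ ^ 2 = ‖x‖ ^ 2 - 2 * inner ℝ a x + ‖a‖ ^ 2 := by
    rw [norm_sub_sq_real, real_inner_comm]
  rw [hx] at hexp
  linarith

lemma convexHull_subset_setOf_le_real_inner {A : Set E} {a : E} {c : ℝ}
    (hA : ∀ x ∈ A, c ≤ inner ℝ a x) : convexHull ℝ A ⊆ {y | c ≤ inner ℝ a y} :=
  convexHull_min hA (convex_halfSpace_ge (innerSL ℝ a).isLinear c)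

lemma real_inner_lt_of_mem_closedBall {a y : E} {r γ : ℝ} (hr : 0 < r) (hγ : 0 < γ)
    (ha : ‖a‖ = r) (hy : y ∈ closedBall (0 : E) (r - γ ^ 2 / r)) :
    inner ℝ a y < r ^ 2 - γ ^ 2 / 2 := by
  rw [mem_closedBall_zero_iff] at hy
  have hρ : r * (r - γ ^ 2 / r) = r ^ 2 - γ ^ 2 := by field_simp
  calc inner ℝ a y ≤ ‖a‖ * ‖y‖ := real_inner_le_norm a y
    _ ≤ r * (r - γ ^ 2 / r) := by rw [ha]; exact mul_le_mul_of_nonneg_left hy hr.le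
    _ < r ^ 2 - γ ^ 2 / 2 := by rw [hρ]; linarith [pow_pos hγ 2]

theorem stmt5_general (M : ℕ) (r γ : ℝ) (hr0 : 0 < r) (hγ0 : 0 < γ)
    (a : EuclideanSpace ℝ (Fin M)) (ha : a ∈ Metric.sphere (0 : EuclideanSpace ℝ (Fin M)) r)
    (A : Set (EuclideanSpace ℝ (Fin M)))
    (hA : A ⊆ Metric.sphere (0 : EuclideanSpace ℝ (Fin M)) r)
    (hAa : ∀ x ∈ A, dist x a ≤ γ) :
    convexHull ℝ A ∩ Metric.closedBall (0 : EuclideanSpace ℝ (Fin M)) (r - γ ^ 2 / r) = ∅ := by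
  rw [mem_sphere_zero_iff_norm] at ha
  have hcap : ∀ x ∈ A, r ^ 2 - γ ^ 2 / 2 ≤ inner ℝ a x := fun x hx => by
    rw [← ha]
    exact sq_norm_sub_sq_div_two_le_real_inner_of_dist_le
      ((mem_sphere_zero_iff_norm.mp (hA hx)).trans ha.symm) (hAa x hx)
  refine Set.eq_empty_of_forall_notMem fun y ⟨hy, hball⟩ => ?_
  exact (convexHull_subset_setOf_le_real_inner hcap hy).not_gt
    (real_inner_lt_of_mem_closedBall hr0 hγ0 ha hball)

/-- **Proposition 7.1.** Let `0 < r < 1`, let `a` be a point of the sphere of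
radius `r` centered at the origin of `ℝ^M`, and let `A` be a subset of that sphere with
`‖x - a‖ ≤ γ` for all `x ∈ A`, where `0 < γ < r`. Then the convex hull of `A` does not meet the
closed ball of radius `ρ = r - γ²/r` centered at the origin. -/
theorem stmt5 (M : ℕ) (r γ : ℝ) (hr0 : 0 < r) (hr1 : r < 1) (hγ0 : 0 < γ) (hγr : γ < r)
    (a : EuclideanSpace ℝ (Fin M)) (ha : a ∈ Metric.sphere (0 : EuclideanSpace ℝ (Fin M)) r)
    (A : Set (EuclideanSpace ℝ (Fin M)))
    (hA : A ⊆ Metric.sphere (0 : EuclideanSpace ℝ (Fin M)) r)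
    (hAa : ∀ x ∈ A, dist x a ≤ γ) :
    convexHull ℝ A ∩ Metric.closedBall (0 : EuclideanSpace ℝ (Fin M)) (r - γ ^ 2 / r) = ∅ :=
  stmt5_general M r γ hr0 hγ0 a ha A hA hAa
end

section
/- Let S be a subset of the unit sphere of ℝ^M, let 0 < ρ_1 < r, and let 0 < δ < √(2(1 − ρ_1/r)). Assume z_1, …, z_m ∈ S are such that S is contained in the union of the open balls z_j + δB, 1 ≤ j ≤ m, where B is the open unit ball. Then the convex set Q = ∩_{j=1}^m { y ∈ ℝ^M : ⟨y, z_j⟩ ≤ ρ_1 } does not meet the set rS = { ry : y ∈ S }. -/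
open RealInnerProductSpace

/-- **Proposition 8.4.** Let `S` be a subset of the unit sphere of `ℝ^M`, let
`0 < ρ₁ < r` and `0 < δ < √(2 (1 - ρ₁ / r))`. Assume `z 1, …, z m ∈ S` are such that `S` is
covered by the open balls `z j + δ B`. Then the convex set
`Q = ⋂ j, {y : ⟪y, z j⟫ ≤ ρ₁}` does not meet `r • S`. -/
theorem stmt8 (M m : ℕ) (S : Set (EuclideanSpace ℝ (Fin M)))
    (hS : S ⊆ Metric.sphere (0 : EuclideanSpace ℝ (Fin M)) 1)
    (ρ₁ r δ : ℝ) (hρ₁ : 0 < ρ₁) (hρr : ρ₁ < r)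
    (hδ0 : 0 < δ) (hδ : δ < Real.sqrt (2 * (1 - ρ₁ / r)))
    (z : Fin m → EuclideanSpace ℝ (Fin M)) (hz : ∀ j, z j ∈ S)
    (hcover : S ⊆ ⋃ j, Metric.ball (z j) δ) :
    (⋂ j, {y : EuclideanSpace ℝ (Fin M) | ⟪y, z j⟫ ≤ ρ₁}) ∩ ((fun y => r • y) '' S) = ∅ := by
  have hr : 0 < r := hρ₁.trans hρr
  ext x
  simp only [Set.mem_inter_iff, Set.mem_iInter, Set.mem_setOf_eq, Set.mem_image,
    Set.mem_empty_iff_false, iff_false, not_and]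
  rintro hQ ⟨y, hyS, rfl⟩
  obtain ⟨j, hj⟩ := Set.mem_iUnion.mp (hcover hyS)
  have hyn : ‖y‖ = 1 := by simpa using hS hyS
  have hzn : ‖z j‖ = 1 := by simpa using hS (hz j)
  have hd : ‖y - z j‖ < δ := by simpa [dist_eq_norm] using hj
  have hδ2 : δ ^ 2 < 2 * (1 - ρ₁ / r) := by
    have h0 : 0 ≤ 2 * (1 - ρ₁ / r) := by
      have : ρ₁ / r < 1 := (div_lt_one hr).mpr hρr
      nlinarith
    nlinarith [Real.sq_sqrt h0, Real.sqrt_nonneg (2 * (1 - ρ₁ / r))]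
  have hexp : ‖y - z j‖ ^ 2 = 2 - 2 * ⟪y, z j⟫ := by
    rw [← real_inner_self_eq_norm_sq]
    have := real_inner_self_eq_norm_sq y
    have := real_inner_self_eq_norm_sq (z j)
    rw [inner_sub_sub_self]
    rw [real_inner_comm (z j) y]
    nlinarith
  have hinner : 1 - δ ^ 2 / 2 < ⟪y, z j⟫ := by nlinarith [norm_nonneg (y - z j)]
  have hgt : ρ₁ / r < ⟪y, z j⟫ := by nlinarith
  have := hQ j
  rw [real_inner_smul_left] at this
  rw [div_lt_iff₀ hr] at hgt
  nlinarith
end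

section
/- Let L_1, …, L_p be hyperplanes in ℝ^d, d ≥ 1, and set 𝓛 = L_1 ∪ ⋯ ∪ L_p. Let q ∈ ℝ^d be a vector not contained in any of the hyperplanes through the origin parallel to L_1, …, L_p. Then for every ε > 0 there exist real numbers ε > t_1 > t_2 > ⋯ > t_d > 0 such that 𝓛 ∩ (𝓛 + t_1 q) ∩ ⋯ ∩ (𝓛 + t_d q) = ∅. -/
open MeasureTheory Module


/-- Let `L 1, …, L p` be hyperplanes in `ℝ^d`, `d ≥ 1`, and set
`𝓛 = L 1 ∪ ⋯ ∪ L p`. Let `q ∈ ℝ^d` be a vector not contained in any of the directions of the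
`L i` (the parallel hyperplanes through the origin). Then for every `ε > 0` there exist
`ε > t 1 > t 2 > ⋯ > t d > 0` with `𝓛 ∩ (𝓛 + t 1 • q) ∩ ⋯ ∩ (𝓛 + t d • q) = ∅`. -/
theorem stmt10 (d p : ℕ) (hd : 1 ≤ d)
    (L : Fin p → AffineSubspace ℝ (EuclideanSpace ℝ (Fin d)))
    (hLne : ∀ i, ((L i : Set (EuclideanSpace ℝ (Fin d)))).Nonempty)
    (hLdim : ∀ i, Module.finrank ℝ (L i).direction = d - 1)
    (q : EuclideanSpace ℝ (Fin d)) (hq : ∀ i, q ∉ (L i).direction) :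
    ∀ ε : ℝ, 0 < ε →
      ∃ t : Fin d → ℝ, StrictAnti t ∧ (∀ j, 0 < t j) ∧ (∀ j, t j < ε) ∧
        (⋃ i, (L i : Set (EuclideanSpace ℝ (Fin d)))) ∩
          (⋂ j : Fin d, (fun x => x + t j • q) ''
            (⋃ i, (L i : Set (EuclideanSpace ℝ (Fin d))))) = ∅ := by
  intro ε hε
  -- choose base points
  choose a ha using hLne
  -- choose dual functionals
  have hf : ∀ i : Fin p, ∃ f : EuclideanSpace ℝ (Fin d) →ₗ[ℝ] ℝ, (∀ w ∈ (L i).direction, f w = 0) ∧ f q = 1 := by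
    intro i
    obtain ⟨f, hfq, hfbot⟩ := (L i).direction.exists_dual_map_eq_bot_of_notMem (hq i)
      inferInstance
    refine ⟨(f q)⁻¹ • f, ?_, by simp [inv_mul_cancel₀ hfq]⟩
    intro w hw
    have : f w = 0 := by
      have : f w ∈ ((L i).direction).map f := Submodule.mem_map_of_mem hw
      rwa [hfbot, Submodule.mem_bot] at this
    simp [this]
  choose f hf0 hfq using hf
  -- key: membership in translated hyperplane determines t
  have key : ∀ (i : Fin p) (s : ℝ) (x : EuclideanSpace ℝ (Fin d)), x - s • q ∈ L i → f i (x - a i) = s := by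
    intro i s x hx
    have hmem : (x - s • q) - a i ∈ (L i).direction :=
      AffineSubspace.vsub_mem_direction hx (ha i)
    have h0 := hf0 i _ hmem
    have h1 : x - s • q - a i = (x - a i) - s • q := by abel
    rw [h1, map_sub, LinearMap.map_smul, smul_eq_mul, hfq i] at h0
    linarith
  -- bad sets
  set B : (Fin (d+1) → Fin p) → Set (Fin d → ℝ) :=
    fun σ => {t | ∃ x : EuclideanSpace ℝ (Fin d), x ∈ L (σ 0) ∧ ∀ j : Fin d, x - t j • q ∈ L (σ j.succ)} with hB
  -- each bad set is contained in a proper affine subspace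
  have hBnull : ∀ σ, volume (B σ) = 0 := by
    intro σ
    set Ψ : EuclideanSpace ℝ (Fin d) →ᵃ[ℝ] (Fin d → ℝ) :=
      { toFun := fun x => fun j => f (σ j.succ) (x - a (σ j.succ))
        linear := LinearMap.pi (fun j => f (σ j.succ))
        map_vadd' := by
          intro x v
          funext j
          simp [LinearMap.pi_apply, map_sub, map_add]
          abel } with hΨ
    have hsub : B σ ⊆ ((L (σ 0)).map Ψ : Set (Fin d → ℝ)) := by
      rintro t ⟨x, hx0, hxj⟩
      refine ⟨x, hx0, ?_⟩
      funext j
      exact key _ _ _ (hxj j)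
    refine measure_mono_null hsub ?_
    refine Measure.addHaar_affineSubspace volume _ ?_
    intro htop
    have h1 : finrank ℝ ((L (σ 0)).map Ψ).direction = d := by
      rw [htop, AffineSubspace.direction_top]
      simp [finrank_top]
    rw [AffineSubspace.map_direction] at h1
    have h2 : finrank ℝ (((L (σ 0)).direction).map Ψ.linear) ≤ d - 1 := by
      rw [← hLdim (σ 0)]
      exact Submodule.finrank_map_le _ _
    omega
  have hBadnull : volume (⋃ σ : Fin (d+1) → Fin p, B σ) = 0 :=
    measure_iUnion_null fun σ => hBnull σ
  -- the good box
  set lo : Fin d → ℝ := fun j => ε * ((d:ℝ) - (j:ℕ)) / (d + 1) with hlo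
  set hi : Fin d → ℝ := fun j => ε * ((d:ℝ) - (j:ℕ) + 1) / (d + 1) with hhi
  set S : Set (Fin d → ℝ) := Set.pi Set.univ (fun j => Set.Ioo (lo j) (hi j)) with hS
  have hSvol : volume S ≠ 0 := by
    rw [hS, volume_pi_pi]
    rw [Finset.prod_ne_zero_iff]
    intro j _
    rw [Real.volume_Ioo]
    simp only [ne_eq, ENNReal.ofReal_eq_zero, not_le]
    rw [hhi, hlo]
    have : (0:ℝ) < d + 1 := by positivity
    rw [div_sub_div_same]
    rw [show ε * (d - j + 1) - ε * (d - j) = ε by ring]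
    positivity
  have hdiff : volume (S \ ⋃ σ : Fin (d+1) → Fin p, B σ) ≠ 0 := by
    rwa [measure_diff_null hBadnull]
  obtain ⟨t, htS, htB⟩ := nonempty_of_measure_ne_zero hdiff
  rw [hS, Set.mem_univ_pi] at htS
  have hjd : ∀ j : Fin d, (j : ℝ) ≤ d - 1 := by
    intro j
    have := j.isLt
    have : (j : ℝ) ≤ (d : ℝ) - 1 := by
      have h1 : (j : ℕ) ≤ d - 1 := by omega
      have := Nat.cast_le (α := ℝ).2 h1
      push_cast [Nat.cast_sub hd] at this ⊢
      linarith
    exact this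
  have hpos : ∀ j, 0 < t j := by
    intro j
    have h := (htS j).1
    have hj := hjd j
    have hd1 : (0:ℝ) < d + 1 := by positivity
    have : 0 ≤ lo j := by
      rw [hlo]
      have : (0:ℝ) ≤ (d:ℝ) - j := by linarith
      positivity
    linarith
  have hlt : ∀ j, t j < ε := by
    intro j
    have h := (htS j).2
    have : hi j ≤ ε := by
      rw [hhi]
      rw [div_le_iff₀ (by positivity)]
      have : (0:ℝ) ≤ ((j:ℕ):ℝ) := Nat.cast_nonneg _
      nlinarith
    linarith
  have hanti : StrictAnti t := by
    intro j k hjk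
    have h1 := (htS k).2
    have h2 := (htS j).1
    have : hi k ≤ lo j := by
      rw [hhi, hlo]
      have hjk' : (j:ℕ) + 1 ≤ (k:ℕ) := hjk
      have : ((j:ℕ):ℝ) + 1 ≤ ((k:ℕ):ℝ) := by exact_mod_cast hjk'
      have hd1 : (0:ℝ) < (d:ℝ) + 1 := by positivity
      apply div_le_div_of_nonneg_right ?_ hd1.le
      nlinarith
    linarith
  refine ⟨t, hanti, hpos, hlt, ?_⟩
  rw [Set.eq_empty_iff_forall_notMem]
  rintro x ⟨hx1, hx2⟩
  obtain ⟨_, ⟨i0, rfl⟩, hx0⟩ := hx1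
  have hxj : ∀ j : Fin d, ∃ i : Fin p, x - t j • q ∈ L i := by
    intro j
    have := Set.mem_iInter.1 hx2 j
    obtain ⟨y, hy, hyx⟩ := this
    obtain ⟨_, ⟨i, rfl⟩, hyi⟩ := hy
    exact ⟨i, by rw [← hyx]; simpa using hyi⟩
  choose i hi' using hxj
  apply htB
  exact Set.mem_iUnion.2 ⟨Fin.cons i0 i, x, by rwa [Fin.cons_zero], fun j => by
    rw [Fin.cons_succ]; exact hi' j⟩
end

section
/- Let P = ∩_{i=1}^n { y ∈ ℝ^M : ⟨y, x_i⟩ ≤ 1 } be a bounded set, where x_1, …, x_n ∈ ℝ^M ∖ {0}, and assume the representation is irreducible, i.e. P ≠ ∩_{i≠k} { y : ⟨y, x_i⟩ ≤ 1 } for each k. Set F_i = P ∩ { y : ⟨y, x_i⟩ = 1 } (the facets of P) and skel(P) = ∪_{i=1}^n (F_i ∖ ri(F_i)), where ri denotes relative interior. Then for every θ > 0 there exists η > 0 such that for each i, 1 ≤ i ≤ n, the set bP ∩ { y ∈ ℝ^M : 1 − η < ⟨y, x_i⟩ < 1 } is contained in the θ-neighbourhood { y ∈ bP : dist(y, skel(P))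 < θ } of skel(P) in bP. -/
open RealInnerProductSpace

/-- **Proposition 12.1.** Let `P = ⋂ i, {y : ⟪y, x i⟫ ≤ 1}` be bounded, with
`x i ≠ 0`, and assume the representation is irreducible. Let `F i = P ∩ {y : ⟪y, x i⟫ = 1}` be
the facets and `skel P = ⋃ i, (F i \ ri (F i))`. Then for every `θ > 0` there is `η > 0` such
that for each `i` the set `bP ∩ {y : 1 - η < ⟪y, x i⟫ < 1}` is contained in the
`θ`-neighbourhood of `skel P` in `bP`. -/
theorem stmt12 (M n : ℕ) (x : Fin n → EuclideanSpace ℝ (Fin M)) (hx : ∀ i, x i ≠ 0)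
    (P : Set (EuclideanSpace ℝ (Fin M)))
    (hP : P = ⋂ i, {y : EuclideanSpace ℝ (Fin M) | ⟪y, x i⟫ ≤ 1})
    (hbdd : Bornology.IsBounded P)
    (hirr : ∀ k : Fin n,
      P ≠ ⋂ i ∈ {i : Fin n | i ≠ k}, {y : EuclideanSpace ℝ (Fin M) | ⟪y, x i⟫ ≤ 1})
    (F : Fin n → Set (EuclideanSpace ℝ (Fin M)))
    (hF : ∀ i, F i = P ∩ {y | ⟪y, x i⟫ = 1})
    (skelP : Set (EuclideanSpace ℝ (Fin M)))
    (hskel : skelP = ⋃ i, (F i \ intrinsicInterior ℝ (F i))) :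
    ∀ θ : ℝ, 0 < θ → ∃ η : ℝ, 0 < η ∧ ∀ i : Fin n,
      frontier P ∩ {y | 1 - η < ⟪y, x i⟫ ∧ ⟪y, x i⟫ < 1} ⊆
        {y ∈ frontier P | Metric.infDist y skelP < θ} := by
  classical
  have hconts : ∀ i : Fin n, Continuous fun y : EuclideanSpace ℝ (Fin M) => ⟪y, x i⟫ :=
    fun i => continuous_id.inner continuous_const
  have hPmem : ∀ y : EuclideanSpace ℝ (Fin M), y ∈ P ↔ ∀ i, ⟪y, x i⟫ ≤ 1 := by
    intro y; rw [hP]; simp [Set.mem_iInter]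
  have hPclosed : IsClosed P := by
    rw [hP]; exact isClosed_iInter fun i => isClosed_le (hconts i) continuous_const
  have hVopen : IsOpen {y : EuclideanSpace ℝ (Fin M) | ∀ i, ⟪y, x i⟫ < 1} := by
    have h : {y : EuclideanSpace ℝ (Fin M) | ∀ i, ⟪y, x i⟫ < 1}
        = ⋂ i, {y | ⟪y, x i⟫ < 1} := by ext y; simp
    rw [h]; exact isOpen_iInter_of_finite fun i => isOpen_lt (hconts i) continuous_const
  have hfrsub : frontier P ⊆ P := hPclosed.frontier_subset
  -- every frontier point saturates some constraint
  have hfr : ∀ y ∈ frontier P, ∃ j, ⟪y, x j⟫ = 1 := by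
    intro y hy
    by_contra hcon
    push_neg at hcon
    have hyP : y ∈ P := hfrsub hy
    have hlt : ∀ i, ⟪y, x i⟫ < 1 := fun i => lt_of_le_of_ne ((hPmem y).1 hyP i) (hcon i)
    have : y ∈ interior P := by
      apply interior_mono (s := {y : EuclideanSpace ℝ (Fin M) | ∀ i, ⟪y, x i⟫ < 1})
      · intro z hz; exact (hPmem z).2 fun i => (hz i).le
      · rwa [hVopen.interior_eq]
    rw [hPclosed.frontier_eq] at hy
    exact hy.2 this
  -- irreducibility witness: a point of `F i` strictly inside all other constraints
  have hwit : ∀ i : Fin n, ∃ w, w ∈ F i ∧ ∀ j, j ≠ i → ⟪w, x j⟫ < 1 := by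
    intro i
    have hsub : P ⊆ ⋂ j ∈ {j : Fin n | j ≠ i},
        {y : EuclideanSpace ℝ (Fin M) | ⟪y, x j⟫ ≤ 1} := by
      intro y hy
      refine Set.mem_iInter₂.2 fun j _ => (hPmem y).1 hy j
    obtain ⟨z, hz1, hz2⟩ : ∃ z, z ∈ (⋂ j ∈ {j : Fin n | j ≠ i},
        {y : EuclideanSpace ℝ (Fin M) | ⟪y, x j⟫ ≤ 1}) ∧ z ∉ P := by
      by_contra h
      push_neg at h
      exact hirr i (hsub.antisymm h)
    have hzle : ∀ j, j ≠ i → ⟪z, x j⟫ ≤ 1 := fun j hj => Set.mem_iInter₂.1 hz1 j hj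
    have h1 : 1 < ⟪z, x i⟫ := by
      by_contra h
      push_neg at h
      exact hz2 ((hPmem z).2 fun j => by
        by_cases hj : j = i
        · subst hj; exact h
        · exact hzle j hj)
    have hc0 : (0:ℝ) < ⟪z, x i⟫ := lt_trans one_pos h1
    refine ⟨(⟪z, x i⟫)⁻¹ • z, ?_, ?_⟩
    · have hinner : ∀ j, ⟪(⟪z, x i⟫)⁻¹ • z, x j⟫ = (⟪z, x i⟫)⁻¹ * ⟪z, x j⟫ :=
        fun j => real_inner_smul_left _ _ _
      have heq : ⟪(⟪z, x i⟫)⁻¹ • z, x i⟫ = 1 := by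
        rw [hinner i, inv_mul_cancel₀ (ne_of_gt hc0)]
      rw [hF]
      refine ⟨(hPmem _).2 fun j => ?_, heq⟩
      by_cases hj : j = i
      · subst hj; exact heq.le
      · rw [hinner j]
        have := hzle j hj
        have hinv : (⟪z, x i⟫)⁻¹ < 1 := by
          rw [inv_lt_one_iff₀]; right; exact h1
        nlinarith [inv_pos.2 hc0]
    · intro j hj
      rw [real_inner_smul_left]
      have := hzle j hj
      have hinv : (⟪z, x i⟫)⁻¹ < 1 := by
        rw [inv_lt_one_iff₀]; right; exact h1
      nlinarith [inv_pos.2 hc0]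
  -- relative interior points of a facet satisfy all other constraints strictly
  have hri : ∀ i : Fin n, ∀ y ∈ intrinsicInterior ℝ (F i), ∀ j, j ≠ i → ⟪y, x j⟫ < 1 := by
    intro i y hy j hj
    have hyF : y ∈ F i := intrinsicInterior_subset hy
    have hyP : y ∈ P := by rw [hF] at hyF; exact hyF.1
    rcases lt_or_eq_of_le ((hPmem y).1 hyP j) with h | h
    · exact h
    exfalso
    obtain ⟨w, hwF, hw⟩ := hwit i
    obtain ⟨z, hzint, rfl⟩ := hy
    have hwA : w ∈ affineSpan ℝ (F i) := subset_affineSpan ℝ _ hwF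
    set c : ℝ → (affineSpan ℝ (F i) : Set (EuclideanSpace ℝ (Fin M))) :=
      fun t => ⟨AffineMap.lineMap w (↑z : EuclideanSpace ℝ (Fin M)) t,
        AffineMap.lineMap_mem t hwA z.2⟩ with hc
    have hcont : Continuous c := Continuous.subtype_mk (AffineMap.lineMap_continuous) _
    have hopen : IsOpen (c ⁻¹' interior
        ((↑) ⁻¹' F i : Set (affineSpan ℝ (F i) : Set (EuclideanSpace ℝ (Fin M))))) :=
      isOpen_interior.preimage hcont
    have h1mem : (1:ℝ) ∈ c ⁻¹' interior
        ((↑) ⁻¹' F i : Set (affineSpan ℝ (F i) : Set (EuclideanSpace ℝ (Fin M)))) := by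
      have hc1 : c 1 = z := Subtype.ext (by simp [hc])
      simp only [Set.mem_preimage, hc1]
      exact hzint
    obtain ⟨ε, hε, hball⟩ := Metric.isOpen_iff.1 hopen 1 h1mem
    set t : ℝ := 1 + ε/2 with hts
    have htb : t ∈ Metric.ball (1:ℝ) ε := by
      simp only [Metric.mem_ball, hts, Real.dist_eq]
      rw [add_sub_cancel_left, abs_of_pos (by linarith)]
      linarith
    have htF' : c t ∈ (Subtype.val ⁻¹' F i) := interior_subset (hball htb)
    have htF : (AffineMap.lineMap w (↑z : EuclideanSpace ℝ (Fin M)) t) ∈ F i := htF'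
    have htF2 : (AffineMap.lineMap w (↑z : EuclideanSpace ℝ (Fin M)) t) ∈
        P ∩ {y | ⟪y, x i⟫ = 1} := by rw [← hF i]; exact htF
    have hle := (hPmem _).1 htF2.1 j
    rw [AffineMap.lineMap_apply_module] at hle
    rw [inner_add_left, real_inner_smul_left, real_inner_smul_left, h] at hle
    have hwj := hw j hj
    have ht1 : 1 < t := by rw [hts]; linarith
    nlinarith
  -- main argument
  intro θ hθ
  set S : Set (EuclideanSpace ℝ (Fin M)) :=
    frontier P ∩ {y | θ ≤ Metric.infDist y skelP} with hS
  have hSclosed : IsClosed S :=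
    isClosed_frontier.inter (isClosed_le continuous_const
      (Metric.continuous_infDist_pt skelP))
  have hPcompact : IsCompact P := Metric.isCompact_of_isClosed_isBounded hPclosed hbdd
  have hScompact : IsCompact S :=
    hPcompact.of_isClosed_subset hSclosed fun y hy => hfrsub hy.1
  have key : ∀ i : Fin n, ∃ η : ℝ, 0 < η ∧
      ∀ y ∈ S, ⟪y, x i⟫ < 1 → ⟪y, x i⟫ ≤ 1 - η := by
    intro i
    set A : Set (EuclideanSpace ℝ (Fin M)) := S ∩ {y | ⟪y, x i⟫ < 1} with hA
    rcases A.eq_empty_or_nonempty with hAe | hAne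
    · refine ⟨1, one_pos, fun y hyS hylt => ?_⟩
      have hyA : y ∈ A := ⟨hyS, hylt⟩
      rw [hAe] at hyA
      exact hyA.elim
    · have hclA : closure A ⊆ S := closure_minimal Set.inter_subset_left hSclosed
      have hKcompact : IsCompact (closure A) :=
        hScompact.of_isClosed_subset isClosed_closure hclA
      obtain ⟨m, hmK, hmax⟩ := hKcompact.exists_isMaxOn hAne.closure
        ((hconts i).continuousOn)
      have hmS : m ∈ S := hclA hmK
      have hm1 : ⟪m, x i⟫ ≤ 1 := (hPmem m).1 (hfrsub hmS.1) i
      have hmlt : ⟪m, x i⟫ < 1 := by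
        rcases lt_or_eq_of_le hm1 with h | h
        · exact h
        exfalso
        have hmF : m ∈ F i := by rw [hF]; exact ⟨hfrsub hmS.1, h⟩
        have hmskel : m ∉ skelP := by
          intro hmem
          have := Metric.infDist_zero_of_mem hmem
          have := hmS.2
          simp only [Set.mem_setOf_eq] at this
          linarith
        have hmri : m ∈ intrinsicInterior ℝ (F i) := by
          by_contra hcon
          exact hmskel (hskel ▸ Set.mem_iUnion.2 ⟨i, hmF, hcon⟩)
        have hstrict := hri i m hmri
        set U : Set (EuclideanSpace ℝ (Fin M)) :=
          ⋂ j ∈ {j : Fin n | j ≠ i}, {y | ⟪y, x j⟫ < 1} with hU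
        have hUopen : IsOpen U :=
          Set.Finite.isOpen_biInter (Set.toFinite _)
            (fun j _ => isOpen_lt (hconts j) continuous_const)
        have hmU : m ∈ U := Set.mem_iInter₂.2 fun j hj => hstrict j hj
        obtain ⟨y, hyU, hyA⟩ := _root_.mem_closure_iff.1 hmK U hUopen hmU
        obtain ⟨j₀, hj₀⟩ := hfr y hyA.1.1
        by_cases hji : j₀ = i
        · subst hji
          have : ⟪y, x j₀⟫ < 1 := hyA.2
          linarith
        · have hlt : ⟪y, x j₀⟫ < 1 := Set.mem_iInter₂.1 hyU j₀ hji
          linarith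
      refine ⟨1 - ⟪m, x i⟫, by linarith, fun y hyS hylt => ?_⟩
      have hycl : y ∈ closure A := subset_closure ⟨hyS, hylt⟩
      have := hmax hycl
      simp only [Set.mem_setOf_eq] at this
      linarith
  choose η hηpos hη using key
  refine ⟨(insert 1 (Finset.image η Finset.univ)).min' (Finset.insert_nonempty _ _),
    ?_, ?_⟩
  · have hmem := Finset.min'_mem (insert 1 (Finset.image η Finset.univ))
      (Finset.insert_nonempty _ _)
    rcases Finset.mem_insert.1 hmem with h | h
    · rw [h]; exact one_pos
    · obtain ⟨i, _, hi⟩ := Finset.mem_image.1 h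
      rw [← hi]; exact hηpos i
  · intro i y hy
    have hyfr := hy.1
    have hy2 : ⟪y, x i⟫ < 1 := hy.2.2
    have hy1 : 1 - (insert 1 (Finset.image η Finset.univ)).min'
        (Finset.insert_nonempty _ _) < ⟪y, x i⟫ := hy.2.1
    refine ⟨hyfr, ?_⟩
    by_contra h
    push_neg at h
    have hyS : y ∈ S := ⟨hyfr, h⟩
    have hle := hη i y hyS hy2
    have hmin : (insert 1 (Finset.image η Finset.univ)).min'
        (Finset.insert_nonempty _ _) ≤ η i :=
      Finset.min'_le _ _ (Finset.mem_insert_of_mem (Finset.mem_image_of_mem η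
        (Finset.mem_univ i)))
    linarith
end

section
/- Let R < ∞, η > 0, ε > 0 and L < ∞. There exists a polynomial Φ : ℂ → ℂ such that |Φ(ζ) − (L + ε)| < ε whenever |ζ| ≤ R and Re ζ ≥ 1, and |Φ(ζ)| < ε whenever |ζ| ≤ R and Re ζ ≤ 1 − η. -/
/-!
Runge's theorem, in the form needed here, comes from the Banach algebra `C(K, ℂ)`: when `Kᶜ` is
connected, the spectrum of the identity of `K` in the closed subalgebra it generates is still `K`,
so for a polynomial `Q` without zeros on `K` the quotient `P / Q` is a uniform limit of polynomials
on `K`. For `K = {‖z‖ ≤ r, Re z ≤ a or b ≤ Re z}` take `P = uⁿ`, `Q = uⁿ + vⁿ` with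
`u = (z - c + 1)²`, `v = (z - c - 1)²` and `c = (a + b) / 2`. As
`‖z - c + 1‖² - ‖z - c - 1‖² = 4 (Re z - c)`, there is `σ < 1` with `‖v‖ ≤ σ ‖u‖` on the right part
of `K` and `‖u‖ ≤ σ ‖v‖` on the left part, so `P / Q` is within `2 σⁿ` of `1`, resp. `0`.
-/

open Polynomial Metric Set

theorem isPreconnected_compl_closedBall {E : Type*} [NormedAddCommGroup E] [NormedSpace ℝ E]
    (h : 1 < Module.rank ℝ E) (x : E) (r : ℝ) : IsPreconnected (closedBall x r)ᶜ := by
  rcases lt_or_ge r 0 with hr | hr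
  · simpa [closedBall_eq_empty.mpr hr] using isPreconnected_univ
  have hball : (fun p : E × ℝ => x + p.2 • p.1) '' (sphere 0 1 ×ˢ Ioi r) = (closedBall x r)ᶜ := by
    ext y
    simp only [mem_image, mem_prod, mem_sphere_zero_iff_norm, mem_Ioi, mem_compl_iff,
      mem_closedBall, not_le, Prod.exists, dist_eq_norm]
    constructor
    · rintro ⟨u, t, ⟨hu, ht⟩, rfl⟩
      simpa [norm_smul, hu, abs_of_pos (hr.trans_lt ht)] using ht
    · intro hy
      have hy0 : ‖y - x‖ ≠ 0 := (hr.trans_lt hy).ne'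
      refine ⟨‖y - x‖⁻¹ • (y - x), ‖y - x‖, ⟨?_, hy⟩, ?_⟩
      · rw [norm_smul, norm_inv, norm_norm, inv_mul_cancel₀ hy0]
      · rw [smul_smul, mul_inv_cancel₀ hy0, one_smul, add_sub_cancel]
  rw [← hball]
  exact ((isPreconnected_sphere h 0 1).prod isPreconnected_Ioi).image _
    (Continuous.continuousOn (by fun_prop))

theorem exists_polynomial_near_div_of_isPreconnected_compl {K : Set ℂ} (hK : IsCompact K)
    (hKc : IsPreconnected Kᶜ) (P Q : ℂ[X]) (hQ : ∀ z ∈ K, Q.eval z ≠ 0) {δ : ℝ} (hδ : 0 < δ) :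
    ∃ p : ℂ[X], ∀ z ∈ K, ‖p.eval z - P.eval z / Q.eval z‖ < δ := by
  have : CompactSpace K := isCompact_iff_compactSpace.mp hK
  rcases isEmpty_or_nonempty K with hempty | hnonempty
  · exact ⟨0, fun z hz => (IsEmpty.false (⟨z, hz⟩ : K)).elim⟩
  let x : C(K, ℂ) := ContinuousMap.restrict K (ContinuousMap.id ℂ)
  let S := Algebra.elemental ℂ x
  let xS : S := ⟨x, Algebra.elemental.self_mem ℂ x⟩
  have hσ : spectrum ℂ x = K := by
    rw [ContinuousMap.spectrum_eq_range]; simp [x]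
  have hσS : spectrum ℂ xS = K := by
    rw [Subalgebra.spectrum_eq_of_isPreconnected_compl S xS (by rwa [← hσ] at hKc)]
    exact hσ
  have hunit : IsUnit (aeval xS Q) := by
    rw [← spectrum.zero_notMem_iff ℂ, spectrum.map_polynomial_aeval, hσS]
    rintro ⟨z, hz, hQz⟩
    exact hQ z hz hQz
  let f : S := aeval xS P * ↑hunit.unit⁻¹
  obtain ⟨g, hg, hfg⟩ := Metric.mem_closure_iff.mp f.2 δ hδ
  obtain ⟨p, rfl⟩ := (Algebra.adjoin_singleton_eq_range_aeval ℂ x ▸ hg : g ∈ (aeval x).range)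
  refine ⟨p, fun z hz => ?_⟩
  have hQinv : ((↑hunit.unit⁻¹ : S) : C(K, ℂ)) ⟨z, hz⟩ = (Q.eval z)⁻¹ := by
    refine eq_inv_of_mul_eq_one_left ?_
    have := congrArg (fun h : S => (h : C(K, ℂ)) ⟨z, hz⟩) hunit.val_inv_mul
    simp only [Subalgebra.coe_mul, ContinuousMap.mul_apply, Subalgebra.coe_one,
      ContinuousMap.one_apply] at this
    rwa [Polynomial.aeval_subalgebra_coe, Polynomial.aeval_continuousMap_apply] at this
  have hf : (f : C(K, ℂ)) ⟨z, hz⟩ = P.eval z / Q.eval z := by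
    simp [f, xS, x, div_eq_mul_inv, hQinv, Polynomial.aeval_subalgebra_coe,
      Polynomial.aeval_continuousMap_apply]
  have := ContinuousMap.dist_apply_le_dist (f := (f : C(K, ℂ))) (g := aeval x p) ⟨z, hz⟩
  rw [hf, Polynomial.aeval_continuousMap_apply, dist_comm, dist_eq_norm] at this
  simpa [x] using this.trans_lt hfg

def splitDisc (r a b : ℝ) : Set ℂ := closedBall 0 r ∩ {z | z.re ≤ a ∨ b ≤ z.re}

theorem isCompact_splitDisc (r a b : ℝ) : IsCompact (splitDisc r a b) :=
  (isCompact_closedBall 0 r).inter_right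
    ((isClosed_le Complex.continuous_re continuous_const).union
      (isClosed_le continuous_const Complex.continuous_re))

theorem isPreconnected_compl_splitDisc (r : ℝ) {a b : ℝ} (hab : a < b) :
    IsPreconnected (splitDisc r a b)ᶜ := by
  have hcompl : (splitDisc r a b)ᶜ = (closedBall 0 r)ᶜ ∪ Complex.re ⁻¹' Ioo a b := by
    ext z
    simp only [splitDisc, mem_compl_iff, mem_inter_iff, mem_ofPred_eq, mem_union, mem_preimage,
      mem_Ioo, not_and, not_or, not_le]
    tauto
  have hstrip : IsPreconnected (Complex.re ⁻¹' Ioo a b) :=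
    ((convex_Ioo a b).linear_preimage Complex.reLm).isPreconnected
  rw [hcompl]
  refine (isPreconnected_compl_closedBall ?_ 0 r).union (⟨(a + b) / 2, |r| + 1⟩ : ℂ) ?_ ?_ hstrip
  · simp [Complex.rank_real_complex]
  · have := Complex.abs_im_le_norm (⟨(a + b) / 2, |r| + 1⟩ : ℂ)
    rw [abs_of_pos (by positivity : (0:ℝ) < |r| + 1)] at this
    simp only [mem_compl_iff, mem_closedBall, dist_zero_right, not_le]
    linarith [le_abs_self r]
  · simp only [mem_preimage, mem_Ioo]
    constructor <;> linarith

theorem norm_sub_sq_sub_norm_sub_sq (z : ℂ) (c : ℝ) :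
    ‖z - (c - 1)‖ ^ 2 - ‖z - (c + 1)‖ ^ 2 = 4 * (z.re - c) := by
  simp only [Complex.sq_norm, Complex.normSq_apply, Complex.sub_re, Complex.sub_im,
    Complex.add_re, Complex.add_im, Complex.ofReal_re, Complex.ofReal_im, Complex.one_re,
    Complex.one_im]
  ring

theorem le_div_add_mul_of_add_le {p q m d : ℝ} (hd : 0 < d) (hp : 0 ≤ p) (hpm : p ≤ m)
    (hpq : p + d ≤ q) : p ≤ m / (m + d) * q := by
  rw [div_mul_eq_mul_div, le_div_iff₀ (by linarith)]
  nlinarith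

section
variable {U V : ℂ} {σ : ℝ} {n : ℕ}

theorem norm_pow_le_pow_mul_norm_pow (h : ‖V‖ ≤ σ * ‖U‖) : ‖V ^ n‖ ≤ σ ^ n * ‖U ^ n‖ := by
  rw [norm_pow, norm_pow, ← mul_pow]
  exact pow_le_pow_left₀ (norm_nonneg V) h n

theorem half_norm_pow_le_norm_pow_add_pow (hσn : σ ^ n ≤ 1 / 2) (h : ‖V‖ ≤ σ * ‖U‖) :
    ‖U ^ n‖ / 2 ≤ ‖U ^ n + V ^ n‖ := by
  have hV := norm_pow_le_pow_mul_norm_pow (n := n) h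
  have := norm_sub_le (U ^ n + V ^ n) (V ^ n)
  rw [add_sub_cancel_right] at this
  nlinarith [norm_nonneg (U ^ n)]

theorem norm_pow_div_pow_add_pow_le (hσ : 0 ≤ σ) (hσn : σ ^ n ≤ 1 / 2)
    (h : ‖V‖ ≤ σ * ‖U‖) : ‖V ^ n / (U ^ n + V ^ n)‖ ≤ 2 * σ ^ n := by
  rw [norm_div]
  refine div_le_of_le_mul₀ (norm_nonneg _) (by positivity) ?_
  calc ‖V ^ n‖ ≤ σ ^ n * ‖U ^ n‖ := norm_pow_le_pow_mul_norm_pow h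
    _ ≤ 2 * σ ^ n * ‖U ^ n + V ^ n‖ := by
        nlinarith [half_norm_pow_le_norm_pow_add_pow hσn h, pow_nonneg hσ n]

theorem pow_add_pow_ne_zero (hσn : σ ^ n ≤ 1 / 2) (h : ‖V‖ ≤ σ * ‖U‖) (hU : U ≠ 0) :
    U ^ n + V ^ n ≠ 0 := by
  have := half_norm_pow_le_norm_pow_add_pow hσn h
  have : 0 < ‖U ^ n‖ := norm_pos_iff.mpr (pow_ne_zero n hU)
  exact norm_pos_iff.mp (by linarith)

theorem norm_pow_div_pow_add_pow_sub_one_le (hσ : 0 ≤ σ) (hσn : σ ^ n ≤ 1 / 2)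
    (h : ‖V‖ ≤ σ * ‖U‖) (hU : U ≠ 0) : ‖U ^ n / (U ^ n + V ^ n) - 1‖ ≤ 2 * σ ^ n := by
  rw [div_sub_one (pow_add_pow_ne_zero hσn h hU), sub_add_cancel_left, neg_div, norm_neg]
  exact norm_pow_div_pow_add_pow_le hσ hσn h

end

theorem exists_ratio_near_indicator_splitDisc (r : ℝ) {a b : ℝ} (hab : a < b) {δ : ℝ}
    (hδ : 0 < δ) :
    ∃ P Q : ℂ[X], ∀ z ∈ splitDisc r a b, Q.eval z ≠ 0 ∧
      (b ≤ z.re → ‖P.eval z / Q.eval z - 1‖ ≤ δ) ∧ (z.re ≤ a → ‖P.eval z / Q.eval z‖ ≤ δ) := by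
  set c := (a + b) / 2 with hc
  set m := (r + |c| + 1) ^ 2
  set σ := m / (m + 2 * (b - a))
  have hm : 0 < m + 2 * (b - a) := by positivity
  have hσ0 : 0 ≤ σ := by positivity
  have hσ1 : σ < 1 := (div_lt_one hm).mpr (by linarith [hc])
  obtain ⟨n, hn⟩ := exists_pow_lt_of_lt_one (lt_min one_half_pos (half_pos hδ)) hσ1
  have hn2 : σ ^ n ≤ 1 / 2 := (hn.trans_le (min_le_left _ _)).le
  have hnδ : 2 * σ ^ n ≤ δ := by linarith [hn.trans_le (min_le_right _ _)]
  refine ⟨((X - C ((c : ℂ) - 1)) ^ 2) ^ n,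
    ((X - C ((c : ℂ) - 1)) ^ 2) ^ n + ((X - C ((c : ℂ) + 1)) ^ 2) ^ n, fun z hz => ?_⟩
  simp only [eval_add, eval_pow, eval_sub, eval_X, eval_C]
  set U := (z - (c - 1)) ^ 2
  set V := (z - (c + 1)) ^ 2
  have hz_norm : ‖z‖ ≤ r := by simpa using hz.1
  have hnorm_le : ∀ e : ℂ, ‖e‖ ≤ |c| + 1 → ‖(z - e) ^ 2‖ ≤ m := by
    intro e he
    rw [norm_pow]
    refine pow_le_pow_left₀ (norm_nonneg _) ?_ 2
    linarith [norm_sub_le z e]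
  have hU_le : ‖U‖ ≤ m :=
    hnorm_le _ ((norm_sub_le _ _).trans (by rw [Complex.norm_real, norm_one, Real.norm_eq_abs]))
  have hV_le : ‖V‖ ≤ m :=
    hnorm_le _ ((norm_add_le _ _).trans (by rw [Complex.norm_real, norm_one, Real.norm_eq_abs]))
  have hUV : ‖U‖ - ‖V‖ = 4 * (z.re - c) := by
    simpa only [U, V, norm_pow] using norm_sub_sq_sub_norm_sub_sq z c
  rcases hz.2 with ha | hb
  · have hU : ‖U‖ ≤ σ * ‖V‖ :=
      le_div_add_mul_of_add_le (by linarith) (norm_nonneg _) hU_le (by linarith [hc])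
    have hV : V ≠ 0 := norm_pos_iff.mp (by linarith [norm_nonneg U, hc])
    rw [add_comm]
    exact ⟨pow_add_pow_ne_zero hn2 hU hV, fun hb => absurd (hab.trans_le hb) ha.not_gt,
      fun _ => (norm_pow_div_pow_add_pow_le hσ0 hn2 hU).trans hnδ⟩
  · have hV : ‖V‖ ≤ σ * ‖U‖ :=
      le_div_add_mul_of_add_le (by linarith) (norm_nonneg _) hV_le (by linarith [hc])
    have hU : U ≠ 0 := norm_pos_iff.mp (by linarith [norm_nonneg V, hc])
    exact ⟨pow_add_pow_ne_zero hn2 hV hU,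
      fun _ => (norm_pow_div_pow_add_pow_sub_one_le hσ0 hn2 hV hU).trans hnδ,
      fun ha => absurd (hab.trans_le hb) ha.not_gt⟩

theorem exists_polynomial_near_indicator_splitDisc (r : ℝ) {a b : ℝ} (hab : a < b) {δ : ℝ}
    (hδ : 0 < δ) :
    ∃ p : ℂ[X], ∀ z ∈ splitDisc r a b,
      (b ≤ z.re → ‖p.eval z - 1‖ < δ) ∧ (z.re ≤ a → ‖p.eval z‖ < δ) := by
  obtain ⟨P, Q, hPQ⟩ := exists_ratio_near_indicator_splitDisc r hab (half_pos hδ)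
  obtain ⟨p, hp⟩ := exists_polynomial_near_div_of_isPreconnected_compl (isCompact_splitDisc r a b)
    (isPreconnected_compl_splitDisc r hab) P Q (fun z hz => (hPQ z hz).1) (half_pos hδ)
  refine ⟨p, fun z hz => ⟨fun hb => ?_, fun ha => ?_⟩⟩
  · calc ‖p.eval z - 1‖ ≤ ‖p.eval z - P.eval z / Q.eval z‖ + ‖P.eval z / Q.eval z - 1‖ :=
          norm_sub_le_norm_sub_add_norm_sub _ _ _
      _ < δ / 2 + δ / 2 := add_lt_add_of_lt_of_le (hp z hz) ((hPQ z hz).2.1 hb)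
      _ = δ := add_halves δ
  · calc ‖p.eval z‖ ≤ ‖P.eval z / Q.eval z‖ + ‖p.eval z - P.eval z / Q.eval z‖ :=
          norm_le_norm_add_norm_sub' _ _
      _ < δ / 2 + δ / 2 := add_lt_add_of_le_of_lt ((hPQ z hz).2.2 ha) (hp z hz)
      _ = δ := add_halves δ

/-- Let `R < ∞`, `η > 0`, `ε > 0` and `L < ∞`. There exists a polynomial
`Φ : ℂ → ℂ` such that `|Φ ζ - (L + ε)| < ε` whenever `|ζ| ≤ R` and `Re ζ ≥ 1`, and
`|Φ ζ| < ε` whenever `|ζ| ≤ R` and `Re ζ ≤ 1 - η`. -/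
theorem stmt16 (R η ε L : ℝ) (hη : 0 < η) (hε : 0 < ε) :
    ∃ Φ : Polynomial ℂ,
      (∀ ζ : ℂ, ‖ζ‖ ≤ R → 1 ≤ ζ.re →
        ‖Φ.eval ζ - ((L : ℂ) + (ε : ℂ))‖ < ε) ∧
      (∀ ζ : ℂ, ‖ζ‖ ≤ R → ζ.re ≤ 1 - η →
        ‖Φ.eval ζ‖ < ε) := by
  set c : ℂ := (L : ℂ) + (ε : ℂ)
  have hc : 0 < ‖c‖ + 1 := by positivity
  have hscale : ∀ w : ℂ, ‖w‖ < ε / (‖c‖ + 1) → ‖c * w‖ < ε := fun w hw => by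
    rw [norm_mul]
    rw [lt_div_iff₀ hc] at hw
    nlinarith [norm_nonneg w]
  obtain ⟨p, hp⟩ := exists_polynomial_near_indicator_splitDisc R (by linarith : 1 - η < 1)
    (div_pos hε hc)
  have hmem : ∀ ζ : ℂ, ‖ζ‖ ≤ R → (ζ.re ≤ 1 - η ∨ 1 ≤ ζ.re) → ζ ∈ splitDisc R (1 - η) 1 :=
    fun ζ hζ hre => ⟨by simpa using hζ, hre⟩
  refine ⟨C c * p, fun ζ hζ hre => ?_, fun ζ hζ hre => ?_⟩
  · simpa [mul_sub] using hscale _ ((hp ζ (hmem ζ hζ (Or.inr hre))).1 hre)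
  · simpa using hscale _ ((hp ζ (hmem ζ hζ (Or.inl hre))).2 hre)
end
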